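/- In the calculus L_lcc, the open extension of applicative similarity coincides with contextual preorder: ≼_lcc^o = ≤_lcc. Consequently, applicative bisimilarity (mutual similarity) coincides with contextual equivalence ∼_lcc. -/

import Mathlib

/-! # Core syntax for the calculi L_lcc, L_name and LR

Following Schmidt-Schauß, Sabel, Machkasova,
"Simulation in the Call-by-Need Lambda-Calculus with Letrec, Case, Constructors, and Seq".

Expressions use de Bruijn indices.  A signature fixes the set of types, the data
constructors of each type together with their arities, and a distinguished type `Bool`
with the 0-ary constructors `True` and `False`. -/



structure Sig : Type 1 where
  TyName : Type
  CName : TyName → Type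
  deceq : ∀ T, DecidableEq (CName T)
  arity : ∀ T, CName T → ℕ
  boolTy : TyName
  trueC : CName boolTy
  falseC : CName boolTy
  true_arity : arity boolTy trueC = 0
  false_arity : arity boolTy falseC = 0
  true_ne_false : trueC ≠ falseC

variable (S : Sig)

/-- ℒ-expressions (de Bruijn): variables, applications, abstractions, fully saturated
constructor applications, `seq`, `case` (with exactly one alternative per constructor
of the scrutinized type; the alternative for `c` binds `arity c` variables), and
`letrec` with `n+1` mutually recursive bindings (so at least one binding); the
bindings and the body are under the `n+1` letrec binders.
The letrec-free expressions are the expressions of `L_lcc`. -/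
inductive Exp : Type where
  | var : ℕ → Exp
  | app : Exp → Exp → Exp
  | lam : Exp → Exp
  | constr : (T : S.TyName) → (c : S.CName T) → (Fin (S.arity T c) → Exp) → Exp
  | seqE : Exp → Exp → Exp
  | caseE : (T : S.TyName) → Exp → ((c : S.CName T) → Exp) → Exp
  | letrecE : (n : ℕ) → (Fin (n+1) → Exp) → Exp → Exp

namespace Core

variable {S}

/-- lift a renaming under `m` binders -/
def liftN (m : ℕ) (f : ℕ → ℕ) : ℕ → ℕ := fun k => if k < m then k else f (k - m) + m

/-- renaming of de Bruijn indices -/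
def rename (f : ℕ → ℕ) : Exp S → Exp S
  | .var k => .var (f k)
  | .app u v => .app (rename f u) (rename f v)
  | .lam u => .lam (rename (liftN 1 f) u)
  | .constr T c args => .constr T c (fun i => rename f (args i))
  | .seqE u v => .seqE (rename f u) (rename f v)
  | .caseE T e alts => .caseE T (rename f e) (fun c => rename (liftN (S.arity T c) f) (alts c))
  | .letrecE n b t => .letrecE n (fun i => rename (liftN (n+1) f) (b i)) (rename (liftN (n+1) f) t)

/-- lift a substitution under `m` binders -/
def upN (m : ℕ) (σ : ℕ → Exp S) : ℕ → Exp S :=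
  fun k => if k < m then .var k else rename (· + m) (σ (k - m))

/-- parallel substitution -/
def subst (σ : ℕ → Exp S) : Exp S → Exp S
  | .var k => σ k
  | .app u v => .app (subst σ u) (subst σ v)
  | .lam u => .lam (subst (upN 1 σ) u)
  | .constr T c args => .constr T c (fun i => subst σ (args i))
  | .seqE u v => .seqE (subst σ u) (subst σ v)
  | .caseE T e alts => .caseE T (subst σ e) (fun c => subst (upN (S.arity T c) σ) (alts c))
  | .letrecE n b t => .letrecE n (fun i => subst (upN (n+1) σ) (b i)) (subst (upN (n+1) σ) t)

/-- the substitution `[t/x0]` for the outermost binder -/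
def consSub (t : Exp S) : ℕ → Exp S
  | 0 => t
  | (k+1) => .var k

/-- the substitution replacing the `m` innermost binders by `args` -/
def instSub {m : ℕ} (args : Fin m → Exp S) : ℕ → Exp S :=
  fun k => if h : k < m then args ⟨k, h⟩ else .var (k - m)

/-- `closedUnder d e`: all free de Bruijn indices of `e` are `< d` -/
def closedUnder : ℕ → Exp S → Prop
  | d, .var k => k < d
  | d, .app u v => closedUnder d u ∧ closedUnder d v
  | d, .lam u => closedUnder (d+1) u
  | d, .constr _ _ args => ∀ i, closedUnder d (args i)
  | d, .seqE u v => closedUnder d u ∧ closedUnder d v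
  | d, .caseE T e alts => closedUnder d e ∧ ∀ c, closedUnder (d + S.arity T c) (alts c)
  | d, .letrecE n b t => (∀ i, closedUnder (d + (n+1)) (b i)) ∧ closedUnder (d + (n+1)) t

/-- a closed expression -/
def closed (e : Exp S) : Prop := closedUnder 0 e

/-- letrec-free expressions, i.e. the expressions of the calculus `L_lcc` -/
def lfree : Exp S → Prop
  | .var _ => True
  | .app u v => lfree u ∧ lfree v
  | .lam u => lfree u
  | .constr _ _ args => ∀ i, lfree (args i)
  | .seqE u v => lfree u ∧ lfree v
  | .caseE _ e alts => lfree e ∧ ∀ c, lfree (alts c)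
  | .letrecE _ _ _ => False

/-- values: abstractions and constructor applications -/
def isValue : Exp S → Prop
  | .lam _ => True
  | .constr _ _ _ => True
  | _ => False

/-- constructor applications -/
def isConstrApp (e : Exp S) : Prop := ∃ T c args, e = .constr T c args

/-- the diverging expression `Ω = (λz. z z) (λx. x x)` -/
def Omega : Exp S :=
  .app (.lam (.app (.var 0) (.var 0))) (.lam (.app (.var 0) (.var 0)))

/-- the constructor `True` (of the distinguished type `Bool`, arity 0) -/
def trueE : Exp S := .constr S.boolTy S.trueC (fun _ => .var 0)

/-- update the alternative for constructor `c0` -/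
def updAlt {T : S.TyName} (alts : (c : S.CName T) → Exp S) (c0 : S.CName T) (e : Exp S) :
    (c : S.CName T) → Exp S :=
  fun c => letI := S.deceq T; if c = c0 then e else alts c

end Core
namespace Core

variable {S : Sig}

/-! ## Contexts -/

/-- reduction contexts of `L_lcc` (and `A`-contexts of `L_name`):
`A ::= [·] | (A s) | (case_T A of alts) | (seq A s)` -/
inductive ACtx (S : Sig) : Type where
  | hole : ACtx S
  | appA : ACtx S → Exp S → ACtx S
  | seqA : ACtx S → Exp S → ACtx S
  | caseA : (T : S.TyName) → ACtx S → ((c : S.CName T) → Exp S) → ACtx S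

/-- plugging an expression into an `A`-context -/
def plugA : ACtx S → Exp S → Exp S
  | .hole, e => e
  | .appA A t, e => .app (plugA A e) t
  | .seqA A t, e => .seqE (plugA A e) t
  | .caseA T A alts, e => .caseE T (plugA A e) alts

/-- renaming an `A`-context (there are no binders above the hole) -/
def renameA (f : ℕ → ℕ) : ACtx S → ACtx S
  | .hole => .hole
  | .appA A t => .appA (renameA f A) (rename f t)
  | .seqA A t => .seqA (renameA f A) (rename f t)
  | .caseA T A alts => .caseA T (renameA f A) (fun c => rename (liftN (S.arity T c) f) (alts c))

/-- general (one-hole, possibly capturing) contexts over ℒ-expressions -/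
inductive Ctx (S : Sig) : Type where
  | hole : Ctx S
  | appL : Ctx S → Exp S → Ctx S
  | appR : Exp S → Ctx S → Ctx S
  | lamC : Ctx S → Ctx S
  | seqL : Ctx S → Exp S → Ctx S
  | seqR : Exp S → Ctx S → Ctx S
  | constrC : (T : S.TyName) → (c : S.CName T) → Fin (S.arity T c) →
      (Fin (S.arity T c) → Exp S) → Ctx S → Ctx S
  | caseScrut : (T : S.TyName) → Ctx S → ((c : S.CName T) → Exp S) → Ctx S
  | caseAlt : (T : S.TyName) → (c0 : S.CName T) → Exp S → ((c : S.CName T) → Exp S) →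
      Ctx S → Ctx S
  | letrecB : (n : ℕ) → Fin (n+1) → (Fin (n+1) → Exp S) → Ctx S → Exp S → Ctx S
  | letrecT : (n : ℕ) → (Fin (n+1) → Exp S) → Ctx S → Ctx S

/-- plugging (capture-permitting) into a general context -/
def plugC : Ctx S → Exp S → Exp S
  | .hole, e => e
  | .appL C t, e => .app (plugC C e) t
  | .appR t C, e => .app t (plugC C e)
  | .lamC C, e => .lam (plugC C e)
  | .seqL C t, e => .seqE (plugC C e) t
  | .seqR t C, e => .seqE t (plugC C e)
  | .constrC T c i args C, e => .constr T c (Function.update args i (plugC C e))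
  | .caseScrut T C alts, e => .caseE T (plugC C e) alts
  | .caseAlt T c0 scrut alts C, e => .caseE T scrut (updAlt alts c0 (plugC C e))
  | .letrecB n i b C t, e => .letrecE n (Function.update b i (plugC C e)) t
  | .letrecT n b C, e => .letrecE n b (plugC C e)

/-- number of binders above the hole of a context -/
def depthC : Ctx S → ℕ
  | .hole => 0
  | .appL C _ => depthC C
  | .appR _ C => depthC C
  | .lamC C => depthC C + 1
  | .seqL C _ => depthC C
  | .seqR _ C => depthC C
  | .constrC _ _ _ _ C => depthC C
  | .caseScrut _ C _ => depthC C
  | .caseAlt T c0 _ _ C => depthC C + S.arity T c0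
  | .letrecB n _ _ C _ => depthC C + (n+1)
  | .letrecT n _ C => depthC C + (n+1)

/-- letrec-free contexts, i.e. the contexts of `L_lcc` -/
def lfreeCtx : Ctx S → Prop
  | .hole => True
  | .appL C t => lfreeCtx C ∧ lfree t
  | .appR t C => lfree t ∧ lfreeCtx C
  | .lamC C => lfreeCtx C
  | .seqL C t => lfreeCtx C ∧ lfree t
  | .seqR t C => lfree t ∧ lfreeCtx C
  | .constrC _ _ _ args C => (∀ i, lfree (args i)) ∧ lfreeCtx C
  | .caseScrut _ C alts => lfreeCtx C ∧ ∀ c, lfree (alts c)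
  | .caseAlt _ _ scrut alts C => lfree scrut ∧ (∀ c, lfree (alts c)) ∧ lfreeCtx C
  | .letrecB _ _ _ _ _ => False
  | .letrecT _ _ _ => False

/-! ## The calculus `L_lcc` -/

/-- the basic reduction rules (nbeta), (nseq), (ncase) of `L_lcc` -/
inductive LccBase : Exp S → Exp S → Prop where
  | nbeta {u t} : LccBase (.app (.lam u) t) (subst (consSub t) u)
  | nseq {v t} : isValue v → LccBase (.seqE v t) t
  | ncase {T c args alts} :
      LccBase (.caseE T (.constr T c args) alts) (subst (instSub args) (alts c))

/-- normal-order reduction of `L_lcc`: a basic rule inside a reduction context -/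
def lccStep (s t : Exp S) : Prop :=
  ∃ (A : ACtx S) (r r' : Exp S), LccBase r r' ∧ s = plugA A r ∧ t = plugA A r'

/-- `s` reduces in finitely many normal-order steps to the value `v` -/
def lccConvTo (s v : Exp S) : Prop := Relation.ReflTransGen lccStep s v ∧ isValue v

/-- convergence in `L_lcc` -/
def lccConv (s : Exp S) : Prop := ∃ v, lccConvTo s v

/-- contextual preorder of `L_lcc` (quantifying over the letrec-free contexts) -/
def leLcc (s t : Exp S) : Prop :=
  ∀ C : Ctx S, lfreeCtx C → lccConv (plugC C s) → lccConv (plugC C t)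

/-- contextual equivalence of `L_lcc` -/
def eqLcc (s t : Exp S) : Prop := leLcc s t ∧ leLcc t s

/-- open extension of a relation, w.r.t. closing `L_lcc`-substitutions -/
def openL (η : Exp S → Exp S → Prop) (s t : Exp S) : Prop :=
  ∀ σ : ℕ → Exp S, (∀ k, lfree (σ k)) →
    closed (subst σ s) → closed (subst σ t) → η (subst σ s) (subst σ t)

/-- `cBot`: expressions all of whose closing `L_lcc`-instances diverge -/
def cBot (s : Exp S) : Prop :=
  ∀ σ : ℕ → Exp S, (∀ k, lfree (σ k)) → closed (subst σ s) → ¬ lccConv (subst σ s)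

/-- greatest fixpoint of a (monotone) operator on relations:
the union of all post-fixed points -/
def gfpRel {α : Type*} (F : (α → α → Prop) → (α → α → Prop)) (a b : α) : Prop :=
  ∃ η, (∀ x y, η x y → F η x y) ∧ η a b

/-- the operator `F_lcc` for applicative similarity in `L_lcc` -/
def Flcc (η : Exp S → Exp S → Prop) (s t : Exp S) : Prop :=
  (∀ s', lccConvTo s (.lam s') →
      ((∃ t', lccConvTo t (.lam t') ∧ openL η s' t') ∨
       (∃ T c targs, lccConvTo t (.constr T c targs) ∧ cBot s'))) ∧
  (∀ T c args, lccConvTo s (.constr T c args) →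
      ∃ targs, lccConvTo t (.constr T c targs) ∧ ∀ i, η (args i) (targs i))

/-- applicative similarity `≼_lcc` in `L_lcc` -/
def simLcc : Exp S → Exp S → Prop := gfpRel Flcc

end Core
namespace Core

variable {S : Sig}

/-! ## The test contexts `Q_lcc` and `Q_CE` -/

/-- the context `case_T [·] of … ((c x1 … x_ar) → x_i) …`, all other alternatives `Ω` -/
def caseSelCtx (T : S.TyName) (c : S.CName T) (i : Fin (S.arity T c)) : Exp S → Exp S :=
  fun e => .caseE T e (fun c' => letI := S.deceq T; if c' = c then .var i else Omega)

/-- the context `case_T [·] of … ((c x1 … x_ar) → True) …`, all other alternatives `Ω` -/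
def caseTrueCtx (T : S.TyName) (c : S.CName T) : Exp S → Exp S :=
  fun e => .caseE T e (fun c' => letI := S.deceq T; if c' = c then trueE else Omega)

/-- the set `Q_lcc`: application to a closed `L_lcc`-expression, the selector case
contexts, and the `True` case contexts -/
def Qlcc (S : Sig) : Set (Exp S → Exp S) :=
  {f | (∃ r : Exp S, lfree r ∧ closed r ∧ f = fun e => .app e r) ∨
       (∃ T c i, f = caseSelCtx T c i) ∨
       (∃ T c, f = caseTrueCtx T c)}

/-- the set `CE_lcc` of closed letrec-free expressions generated by
`r ::= Ω | λx.s | (c r1 … r_ar)` -/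
inductive CE : Exp S → Prop where
  | omega : CE Omega
  | abs {u : Exp S} : lfree (Exp.lam u) → closed (Exp.lam u) → CE (.lam u)
  | constrI {T c} {args : Fin (S.arity T c) → Exp S} :
      (∀ i, CE (args i)) → CE (.constr T c args)

/-- the set `Q_CE`: like `Q_lcc`, but the arguments in application contexts are
restricted to `CE_lcc` -/
def QCE (S : Sig) : Set (Exp S → Exp S) :=
  {f | (∃ r : Exp S, CE r ∧ f = fun e => .app e r) ∨
       (∃ T c i, f = caseSelCtx T c i) ∨
       (∃ T c, f = caseTrueCtx T c)}

/-- `Q1 (Q2 (… (Qn s)))` -/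
def applyAll (l : List (Exp S → Exp S)) (s : Exp S) : Exp S := l.foldr (fun f e => f e) s

/-! ### `Q`-similarity and the inductive `Q`-preorder in `L_lcc` -/

/-- the `Q`-experiment operator for `L_lcc`, instantiated with a set `𝒬` of contexts -/
def FQlcc (𝒬 : Set (Exp S → Exp S)) (η : Exp S → Exp S → Prop) (s t : Exp S) : Prop :=
  ∀ v1, lccConvTo s v1 → ∃ v2, lccConvTo t v2 ∧ ∀ f ∈ 𝒬, η (f v1) (f v2)

/-- `𝒬`-similarity in `L_lcc` -/
def simQlcc (𝒬 : Set (Exp S → Exp S)) : Exp S → Exp S → Prop := gfpRel (FQlcc 𝒬)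

/-- the inductively defined preorder `≤_{lcc,𝒬}` -/
def leQlcc (𝒬 : Set (Exp S → Exp S)) (s t : Exp S) : Prop :=
  ∀ l : List (Exp S → Exp S), (∀ f ∈ l, f ∈ 𝒬) →
    lccConv (applyAll l s) → lccConv (applyAll l t)

end Core
namespace Core

variable {S : Sig}

/-! ## The call-by-need calculus `LR` -/

/-- variable-to-variable binding chains in a letrec environment -/
inductive derefChain {n : ℕ} (b : Fin (n+1) → Exp S) : Fin (n+1) → Fin (n+1) → Prop where
  | refl (i) : derefChain b i i
  | step {i j k : Fin (n+1)} : b i = .var (j : ℕ) → derefChain b j k → derefChain b i k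

/-- `Needed b body i`: binding `i` is visited by the labeling algorithm (its value is
needed), starting from the body of the top-level letrec -/
inductive Needed {n : ℕ} (b : Fin (n+1) → Exp S) (body : Exp S) : Fin (n+1) → Prop where
  | ofBody {A : ACtx S} {i : Fin (n+1)} : body = plugA A (.var (i : ℕ)) → Needed b body i
  | ofBind {k} {A : ACtx S} {i : Fin (n+1)} :
      Needed b body k → b k = plugA A (.var (i : ℕ)) → Needed b body i

/-- renaming used when merging letrec environments: the outer part
(`N` outer bindings, `M` inner bindings) -/
def rhoOut (N M : ℕ) : ℕ → ℕ := fun k => if k < N then k else k + M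

/-- renaming used when merging letrec environments: the inner part -/
def rhoIn (N M : ℕ) : ℕ → ℕ :=
  fun k => if k < M then k + N else if k < M + N then k - M else k

/-- merged environment of `(llet-in)`: outer bindings first, then inner bindings -/
def mergeEnv {n m : ℕ} (b : Fin (n+1) → Exp S) (b2 : Fin (m+1) → Exp S) :
    Fin (n+m+1+1) → Exp S :=
  fun j => if h : (j : ℕ) < n+1
    then rename (rhoOut (n+1) (m+1)) (b ⟨j, h⟩)
    else rename (rhoIn (n+1) (m+1)) (b2 ⟨(j : ℕ) - (n+1), by omega⟩)

/-- merged environment of `(llet-e)`: the environment of the letrec bound at `i`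
is flattened into the outer environment, the binding `i` becomes the inner body -/
def mergeEnvAt {n m : ℕ} (b : Fin (n+1) → Exp S) (i : Fin (n+1))
    (b2 : Fin (m+1) → Exp S) (t2 : Exp S) : Fin (n+m+1+1) → Exp S :=
  fun j => if h : (j : ℕ) < n+1
    then (if (⟨j, h⟩ : Fin (n+1)) = i
          then rename (rhoIn (n+1) (m+1)) t2
          else rename (rhoOut (n+1) (m+1)) (b ⟨j, h⟩))
    else rename (rhoIn (n+1) (m+1)) (b2 ⟨(j : ℕ) - (n+1), by omega⟩)

/-- the environment produced by `(case-in)`/`(case-e)` with `arity c = m+1`: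
all old bindings are shifted, binding `j` becomes `c y1 … y_{m+1}` for the fresh
bindings `y_q = s_q` appended at the end -/
def caseShareEnv {n m : ℕ} (b : Fin (n+1) → Exp S) (j : Fin (n+1))
    {T : S.TyName} (c : S.CName T) (h : S.arity T c = m+1)
    (args : Fin (S.arity T c) → Exp S) : Fin (n+m+1+1) → Exp S :=
  fun p => if hp : (p : ℕ) < n+1
    then (if (⟨p, hp⟩ : Fin (n+1)) = j
          then .constr T c (fun q => .var (n+1+(q : ℕ)))
          else rename (rhoOut (n+1) (m+1)) (b ⟨p, hp⟩))
    else rename (rhoOut (n+1) (m+1)) (args (Fin.cast h.symm ⟨(p : ℕ) - (n+1), by omega⟩))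

/-- the replacement for a `(case-in)`/`(case-e)` redex: `letrec z1 = y1, …, z_{m+1} = y_{m+1}
in alt`, where the `y_q` are the fresh environment bindings (indices `n+1+q` at top level) -/
def caseShareBody {n m : ℕ} {T : S.TyName} (c : S.CName T) (_h : S.arity T c = m+1)
    (alts : (c : S.CName T) → Exp S) : Exp S :=
  .letrecE m (fun q => .var (n+1+(m+1)+(q : ℕ)))
    (rename (liftN (m+1) (rhoOut (n+1) (m+1))) (alts c))

/-- the basic `LR`-rules not involving the top-level environment:
(lbeta), (seq-c), (case-c), (lapp), (lseq), (lcase) -/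
inductive LRbase : Exp S → Exp S → Prop where
  | lbeta {u t} :
      LRbase (.app (.lam u) t) (.letrecE 0 (fun _ => rename (· + 1) t) u)
  | seqc {v t} : isValue v → LRbase (.seqE v t) t
  | casec0 {T c args alts} (h : S.arity T c = 0) :
      LRbase (.caseE T (.constr T c args) alts) (alts c)
  | casec1 {T c args alts m} (h : S.arity T c = m+1) :
      LRbase (.caseE T (.constr T c args) alts)
        (.letrecE m (fun i => rename (· + (m+1)) (args (Fin.cast h.symm i))) (alts c))
  | lapp {n b e t} :
      LRbase (.app (.letrecE n b e) t) (.letrecE n b (.app e (rename (· + (n+1)) t)))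
  | lseq {n b e t} :
      LRbase (.seqE (.letrecE n b e) t) (.letrecE n b (.seqE e (rename (· + (n+1)) t)))
  | lcase {n b e T alts} :
      LRbase (.caseE T (.letrecE n b e) alts)
        (.letrecE n b (.caseE T e (fun c => rename (liftN (S.arity T c) (· + (n+1))) (alts c))))

/-- normal-order reduction `→_LR` of the call-by-need calculus `LR`:
the rules of Fig. 1, applied at the position determined by the labeling algorithm
(in the body or in a needed binding of the top-level letrec, or — for expressions
without a top-level letrec — along the application/seq/case spine). -/
inductive LRstep : Exp S → Exp S → Prop where
  /- basic rule at the top (no top-level letrec environment involved): -/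
  | topA {A : ACtx S} {r r'} : LRbase r r' → LRstep (plugA A r) (plugA A r')
  /- basic rule in the body of the top-level letrec: -/
  | bodyA {n} {b : Fin (n+1) → Exp S} {A : ACtx S} {r r'} :
      LRbase r r' → LRstep (.letrecE n b (plugA A r)) (.letrecE n b (plugA A r'))
  /- basic rule inside a needed binding: -/
  | bindA {n} {b : Fin (n+1) → Exp S} {body} {i : Fin (n+1)} {A : ACtx S} {r r'} :
      Needed b body i → b i = plugA A r → LRbase r r' →
      LRstep (.letrecE n b body) (.letrecE n (Function.update b i (plugA A r')) body)
  /- (llet-in): -/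
  | lletIn {n b m b2 t2} :
      LRstep (.letrecE n b (.letrecE m b2 t2))
        (.letrecE (n+m+1) (mergeEnv b b2) (rename (rhoIn (n+1) (m+1)) t2))
  /- (llet-e): -/
  | lletE {n b body} {i : Fin (n+1)} {m b2 t2} :
      Needed b body i → b i = .letrecE m b2 t2 →
      LRstep (.letrecE n b body)
        (.letrecE (n+m+1) (mergeEnvAt b i b2 t2) (rename (rhoOut (n+1) (m+1)) body))
  /- (cp-in): -/
  | cpIn {n} {b : Fin (n+1) → Exp S} {A : ACtx S} {i j : Fin (n+1)} {u} :
      derefChain b i j → b j = .lam u →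
      LRstep (.letrecE n b (plugA A (.var (i : ℕ)))) (.letrecE n b (plugA A (.lam u)))
  /- (cp-e): -/
  | cpE {n} {b : Fin (n+1) → Exp S} {body} {k : Fin (n+1)} {A : ACtx S} {i j : Fin (n+1)} {u} :
      Needed b body k → b k = plugA A (.var (i : ℕ)) → derefChain b i j → b j = .lam u →
      LRstep (.letrecE n b body) (.letrecE n (Function.update b k (plugA A (.lam u))) body)
  /- (seq-in): -/
  | seqIn {n} {b : Fin (n+1) → Exp S} {A : ACtx S} {i j : Fin (n+1)} {t} :
      derefChain b i j → isConstrApp (b j) →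
      LRstep (.letrecE n b (plugA A (.seqE (.var (i : ℕ)) t)))
        (.letrecE n b (plugA A t))
  /- (seq-e): -/
  | seqEe {n} {b : Fin (n+1) → Exp S} {body} {k : Fin (n+1)} {A : ACtx S} {i j : Fin (n+1)} {t} :
      Needed b body k → b k = plugA A (.seqE (.var (i : ℕ)) t) →
      derefChain b i j → isConstrApp (b j) →
      LRstep (.letrecE n b body) (.letrecE n (Function.update b k (plugA A t)) body)
  /- (case-in), scrutinized constructor of arity 0: -/
  | caseIn0 {n} {b : Fin (n+1) → Exp S} {A : ACtx S} {i j : Fin (n+1)} {T c args alts} :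
      derefChain b i j → b j = .constr T c args → S.arity T c = 0 →
      LRstep (.letrecE n b (plugA A (.caseE T (.var (i : ℕ)) alts)))
        (.letrecE n b (plugA A (alts c)))
  /- (case-e), scrutinized constructor of arity 0: -/
  | caseE0 {n} {b : Fin (n+1) → Exp S} {body} {k : Fin (n+1)} {A : ACtx S} {i j : Fin (n+1)}
      {T c args alts} :
      Needed b body k → b k = plugA A (.caseE T (.var (i : ℕ)) alts) →
      derefChain b i j → b j = .constr T c args → S.arity T c = 0 →
      LRstep (.letrecE n b body) (.letrecE n (Function.update b k (plugA A (alts c))) body)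
  /- (case-in), arity ≥ 1: the constructor arguments are shared in fresh bindings -/
  | caseIn1 {n} {b : Fin (n+1) → Exp S} {A : ACtx S} {i j : Fin (n+1)} {T c args alts m}
      (h : S.arity T c = m+1) :
      derefChain b i j → b j = .constr T c args →
      LRstep (.letrecE n b (plugA A (.caseE T (.var (i : ℕ)) alts)))
        (.letrecE (n+m+1) (caseShareEnv b j c h args)
          (plugA (renameA (rhoOut (n+1) (m+1)) A) (caseShareBody (n := n) c h alts)))
  /- (case-e), arity ≥ 1: -/
  | caseE1 {n} {b : Fin (n+1) → Exp S} {body} {k : Fin (n+1)} {A : ACtx S} {i j : Fin (n+1)}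
      {T c args alts m} (h : S.arity T c = m+1) :
      Needed b body k → b k = plugA A (.caseE T (.var (i : ℕ)) alts) →
      derefChain b i j → b j = .constr T c args →
      LRstep (.letrecE n b body)
        (.letrecE (n+m+1)
          (Function.update (caseShareEnv b j c h args)
            (Fin.castLE (by omega) k)
            (plugA (renameA (rhoOut (n+1) (m+1)) A) (caseShareBody (n := n) c h alts)))
          (rename (rhoOut (n+1) (m+1)) body))

/-- weak head normal forms of `LR`: values, `letrec Env in v` for a value `v`, and
`letrec x1 = (c s⃗), x2 = x1, …, xm = x_{m-1}, Env in xm` -/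
def isLRwhnf (s : Exp S) : Prop :=
  isValue s ∨
  ∃ (n : ℕ) (b : Fin (n+1) → Exp S) (body : Exp S), s = .letrecE n b body ∧
    (isValue body ∨ ∃ i j : Fin (n+1), body = .var (i : ℕ) ∧ derefChain b i j ∧ isConstrApp (b j))

/-- `s` reduces in finitely many `→_LR`-steps to an `LR`-WHNF `v` -/
def lrConvTo (s v : Exp S) : Prop := Relation.ReflTransGen LRstep s v ∧ isLRwhnf v

/-- convergence in `LR` -/
def lrConv (s : Exp S) : Prop := ∃ v, lrConvTo s v

/-- contextual preorder of `LR` -/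
def leLR (s t : Exp S) : Prop := ∀ C : Ctx S, lrConv (plugC C s) → lrConv (plugC C t)

/-- contextual equivalence of `LR` -/
def eqLR (s t : Exp S) : Prop := leLR s t ∧ leLR t s

end Core
namespace Core

variable {S : Sig}

/-! ## The call-by-name calculus `L_name` -/

/-- a letrec frame (one `letrec` environment) -/
def Frame (S : Sig) : Type := Σ n : ℕ, Fin (n+1) → Exp S

/-- plugging under a stack of letrec frames (`L`-contexts), outermost frame first -/
def plugFrames : List (Frame S) → Exp S → Exp S
  | [], e => e
  | ⟨n, b⟩ :: fs, e => .letrecE n b (plugFrames fs e)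

/-- looking up a de Bruijn index in a stack of letrec frames given innermost-first;
the result is weakened to the innermost level -/
def lookRev : List (Frame S) → ℕ → Option (Exp S)
  | [], _ => none
  | ⟨n, b⟩ :: rest, k =>
      if h : k < n+1 then some (b ⟨k, h⟩)
      else (lookRev rest (k - (n+1))).map (rename (· + (n+1)))

/-- the basic rules of `L_name`: (beta), (seq), (case) — with substitution —
and (lapp), (lseq), (lcase) -/
inductive NBase : Exp S → Exp S → Prop where
  | beta {u t} : NBase (.app (.lam u) t) (subst (consSub t) u)
  | seqv {v t} : isValue v → NBase (.seqE v t) t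
  | casec {T c args alts} :
      NBase (.caseE T (.constr T c args) alts) (subst (instSub args) (alts c))
  | lapp {n b e t} :
      NBase (.app (.letrecE n b e) t) (.letrecE n b (.app e (rename (· + (n+1)) t)))
  | lseq {n b e t} :
      NBase (.seqE (.letrecE n b e) t) (.letrecE n b (.seqE e (rename (· + (n+1)) t)))
  | lcase {n b e T alts} :
      NBase (.caseE T (.letrecE n b e) alts)
        (.letrecE n b (.caseE T e (fun c => rename (liftN (S.arity T c) (· + (n+1))) (alts c))))

/-- normal-order reduction `→_name` of `L_name`: a basic rule, or the copy rule (gcp),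
inside a reduction context `L[A]` -/
inductive NStep : Exp S → Exp S → Prop where
  | base {fs : List (Frame S)} {A : ACtx S} {r r'} :
      NBase r r' → NStep (plugFrames fs (plugA A r)) (plugFrames fs (plugA A r'))
  | gcp {fs : List (Frame S)} {A : ACtx S} {k : ℕ} {e : Exp S} :
      lookRev fs.reverse k = some e →
      NStep (plugFrames fs (plugA A (.var k))) (plugFrames fs (plugA A e))

/-- weak head normal forms of `L_name`: `L[v]` for a value `v` -/
def isNameWhnf (s : Exp S) : Prop :=
  ∃ (fs : List (Frame S)) (v : Exp S), s = plugFrames fs v ∧ isValue v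

/-- `s` reduces in finitely many `→_name`-steps to an `L_name`-WHNF `v` -/
def nameConvTo (s v : Exp S) : Prop := Relation.ReflTransGen NStep s v ∧ isNameWhnf v

/-- convergence in `L_name` -/
def nameConv (s : Exp S) : Prop := ∃ v, nameConvTo s v

/-- contextual preorder of `L_name` -/
def leName (s t : Exp S) : Prop := ∀ C : Ctx S, nameConv (plugC C s) → nameConv (plugC C t)

/-- contextual equivalence of `L_name` -/
def eqName (s t : Exp S) : Prop := leName s t ∧ leName t s

/-! ## The translation `N : L_name → L_lcc` via multi-fixpoint combinators -/

/-- iterated application `f a1 … an` -/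
def apps (f : Exp S) (l : List (Exp S)) : Exp S := l.foldl .app f

/-- iterated abstraction `λ^k. e` -/
def lamN : ℕ → Exp S → Exp S
  | 0, e => e
  | (k+1), e => .lam (lamN k e)

/-- shift all indices `≥ c` by `k` -/
def shiftCut (c k : ℕ) : Exp S → Exp S := rename (fun x => if x < c then x else x + k)

/-- the argument list `[g (N-1), …, g 0]`, so that after `N` beta steps the
binder with de Bruijn index `i` receives `g i` -/
def argsOf {N : ℕ} (g : Fin N → Exp S) : List (Exp S) := (List.ofFn g).reverse

/-- `U_i = (x_i' x_1' … x_n')` (under the outer binders) -/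
def Uarg (N : ℕ) (i : Fin N) : Exp S :=
  apps (.var (i : ℕ)) (argsOf (fun j : Fin N => .var (j : ℕ)))

/-- `X_i' = λ x1 … xn. F_i (x1 x1 … xn) … (xn x1 … xn)` with `F_i = λ x1 … xn. gi` -/
def Xarg (N : ℕ) (gi : Exp S) : Exp S :=
  lamN N (apps (lamN N (shiftCut N N gi))
    (argsOf (fun j : Fin N => apps (.var (j : ℕ)) (argsOf (fun l : Fin N => .var (l : ℕ))))))

/-- the translation of one letrec: `(λ x1' … xn'. (λ x1 … xn. t') U1 … Un) X1' … Xn'` -/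
def letrecTrans (N : ℕ) (g : Fin N → Exp S) (t' : Exp S) : Exp S :=
  apps (lamN N (apps (lamN N (shiftCut N N t')) (argsOf (Uarg N))))
    (argsOf (fun i => Xarg N (g i)))

/-- the translation `N : L_name → L_lcc`, eliminating letrec by multi-fixpoint
combinators; it is homomorphic on all other constructs.
(The translation `W : LR → L_name` is the identity.) -/
def Ntr : Exp S → Exp S
  | .var k => .var k
  | .app u v => .app (Ntr u) (Ntr v)
  | .lam u => .lam (Ntr u)
  | .constr T c args => .constr T c (fun i => Ntr (args i))
  | .seqE u v => .seqE (Ntr u) (Ntr v)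
  | .caseE T e alts => .caseE T (Ntr e) (fun c => Ntr (alts c))
  | .letrecE n b t => letrecTrans (n+1) (fun i => Ntr (b i)) (Ntr t)

end Core
namespace Core

variable {S : Sig}

/-! ## `Q`-similarity in `LR` -/

/-- open extension of a relation w.r.t. closing ℒ-substitutions -/
def openAll (η : Exp S → Exp S → Prop) (s t : Exp S) : Prop :=
  ∀ σ : ℕ → Exp S, closed (subst σ s) → closed (subst σ t) → η (subst σ s) (subst σ t)

/-- the `Q`-experiment operator for `LR`, instantiated with a set `𝒬` of contexts -/
def FQLR (𝒬 : Set (Exp S → Exp S)) (η : Exp S → Exp S → Prop) (s t : Exp S) : Prop :=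
  ∀ v1, lrConvTo s v1 → ∃ v2, lrConvTo t v2 ∧ ∀ f ∈ 𝒬, η (f v1) (f v2)

/-- `𝒬`-similarity in `LR` -/
def simQLR (𝒬 : Set (Exp S → Exp S)) : Exp S → Exp S → Prop := gfpRel (FQLR 𝒬)

/-- the inductively defined preorder `≤_{LR,𝒬}` -/
def leQLR (𝒬 : Set (Exp S → Exp S)) (s t : Exp S) : Prop :=
  ∀ l : List (Exp S → Exp S), (∀ f ∈ l, f ∈ 𝒬) →
    lrConv (applyAll l s) → lrConv (applyAll l t)

end Core

/-!
Soundness, `≼ᵒ ⊆ ≤`, is Howe's method. Howe's closure `≼ᴴ` of open similarity contains `≼ᵒ`,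
is compatible with contexts and closed under substitution. By induction on the length of an
evaluation, if `a ≼ᴴ b` are closed and `a` converges then so does `b`. Applied to the
`Ω`-instances of `C[s] ≼ᴴ C[t]` this gives `C[s]⇓ → C[t]⇓`, because an expression converges
as soon as its `Ω`-instance does.

Completeness, `≤ ⊆ ≼ᵒ`: on closed expressions, the preorder "every sequence of `Q_lcc`-tests
(application to a closed argument, selection of a constructor argument, test for a
constructor) that converges on the left converges on the right" is a simulation, hence
contained in `≼`. A contextual approximation `s ≤ t` yields it between closed instances
`σ(s)`, `σ(t)`: a convergent test of `σ(s)` only inspects finitely many entries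
`σ(0), …, σ(d-1)`, and these are supplied by the context `(λ x_{d-1} … x_0. [·]) σ(d-1) … σ(0)`.
-/

namespace Core

variable {S : Sig}

/-! ### Substitution -/

-- The lemmas about `liftN` and `upN` are equalities of functions, so that `simp` can use them
-- under the binders in the structural inductions.
theorem liftN_comp (m : ℕ) (f g : ℕ → ℕ) :
    (fun k => liftN m f (liftN m g k)) = liftN m (fun k => f (g k)) := by
  funext k
  unfold liftN
  split_ifs <;> first | rfl | omega | (congr 2; omega)

theorem rename_rename (f g : ℕ → ℕ) (e : Exp S) :
    rename f (rename g e) = rename (fun k => f (g k)) e := by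
  induction e generalizing f g <;> simp [rename, liftN_comp, *]

theorem liftN_id (m : ℕ) : liftN m (fun k => k) = fun k => k := by
  funext k; simp only [liftN]; split_ifs <;> omega

theorem rename_id (e : Exp S) : rename (fun k => k) e = e := by
  induction e <;> simp [rename, liftN_id, *]

theorem upN_liftN (m : ℕ) (σ : ℕ → Exp S) (f : ℕ → ℕ) :
    (fun k => upN m σ (liftN m f k)) = upN m (fun k => σ (f k)) := by
  funext k
  unfold upN liftN
  split_ifs <;> first | rfl | omega | (congr 2; omega)

theorem subst_rename (σ : ℕ → Exp S) (f : ℕ → ℕ) (e : Exp S) :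
    subst σ (rename f e) = subst (fun k => σ (f k)) e := by
  induction e generalizing σ f <;> simp [rename, subst, upN_liftN, *]

theorem liftN_upN (m : ℕ) (f : ℕ → ℕ) (σ : ℕ → Exp S) :
    (fun k => rename (liftN m f) (upN m σ k)) = upN m (fun k => rename f (σ k)) := by
  funext k
  unfold upN
  split_ifs with h
  · simp [rename, liftN, h]
  · rw [rename_rename, rename_rename]
    congr 1
    funext x
    simp only [liftN, if_neg (show ¬ x + m < m by omega), Nat.add_sub_cancel]

theorem rename_subst (f : ℕ → ℕ) (σ : ℕ → Exp S) (e : Exp S) :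
    rename f (subst σ e) = subst (fun k => rename f (σ k)) e := by
  induction e generalizing σ f <;> simp [rename, subst, liftN_upN, *]

theorem upN_comp (m : ℕ) (σ τ : ℕ → Exp S) :
    (fun k => subst (upN m σ) (upN m τ k)) = upN m (fun k => subst σ (τ k)) := by
  funext k
  unfold upN
  split_ifs with h
  · simp [subst, h]
  · rw [subst_rename, rename_subst]
    congr 1
    funext x
    simp only [if_neg (show ¬ x + m < m by omega), Nat.add_sub_cancel]

theorem subst_subst (σ τ : ℕ → Exp S) (e : Exp S) :
    subst σ (subst τ e) = subst (fun k => subst σ (τ k)) e := by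
  induction e generalizing σ τ <;> simp [subst, upN_comp, *]

theorem upN_var (m : ℕ) (f : ℕ → ℕ) :
    upN m (fun k => (Exp.var (f k) : Exp S)) = fun k => .var (liftN m f k) := by
  funext k
  unfold upN liftN
  split_ifs <;> rfl

theorem rename_eq_subst (f : ℕ → ℕ) (e : Exp S) :
    rename f e = subst (fun k => .var (f k)) e := by
  induction e generalizing f <;> simp [rename, subst, upN_var, *]

theorem subst_var (e : Exp S) : subst .var e = e := by
  have := rename_eq_subst (fun k => k) e
  rwa [rename_id, eq_comm] at this

theorem upN_upN (a b : ℕ) (σ : ℕ → Exp S) : upN a (upN b σ) = upN (a + b) σ := by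
  funext k
  unfold upN
  split_ifs <;> first
    | rfl
    | omega
    | (simp only [rename]; congr 1; omega)
    | (rw [rename_rename, Nat.sub_sub]; congr 1; funext x; omega)

theorem upN_zero (σ : ℕ → Exp S) : upN 0 σ = σ := by
  funext k
  simp only [upN, Nat.not_lt_zero, if_false, Nat.sub_zero, Nat.add_zero, rename_id]

theorem upN_congr {d : ℕ} {σ τ : ℕ → Exp S} (h : ∀ k < d, σ k = τ k) (m : ℕ) :
    ∀ k < d + m, upN m σ k = upN m τ k := by
  intro k hk
  unfold upN
  split_ifs
  · rfl
  · rw [h _ (by omega)]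

theorem subst_congr {d : ℕ} {σ τ : ℕ → Exp S} {e : Exp S} (he : closedUnder d e)
    (h : ∀ k < d, σ k = τ k) : subst σ e = subst τ e := by
  induction e generalizing d σ τ with
  | var k => exact h k he
  | app u v ihu ihv => simp only [subst, ihu he.1 h, ihv he.2 h]
  | lam u ih => simp only [subst, ih he (upN_congr h 1)]
  | constr T c args ih => simp only [subst, fun i => ih i (he i) h]
  | seqE u v ihu ihv => simp only [subst, ihu he.1 h, ihv he.2 h]
  | caseE T e alts ihe ihalts =>
      simp only [subst, ihe he.1 h, fun c => ihalts c (he.2 c) (upN_congr h _)]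
  | letrecE n b t ihb iht =>
      simp only [subst, fun i => ihb i (he.1 i) (upN_congr h _), iht he.2 (upN_congr h _)]

theorem subst_eq_self {d : ℕ} {σ : ℕ → Exp S} {e : Exp S} (he : closedUnder d e)
    (h : ∀ k < d, σ k = .var k) : subst σ e = e :=
  (subst_congr he h).trans (subst_var e)

theorem subst_closed {σ : ℕ → Exp S} {e : Exp S} (he : closed e) : subst σ e = e :=
  subst_eq_self he (fun k hk => absurd hk (Nat.not_lt_zero k))

theorem rename_closed {f : ℕ → ℕ} {e : Exp S} (he : closed e) : rename f e = e := by
  rw [rename_eq_subst]; exact subst_closed he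

theorem closedUnder_mono {d d' : ℕ} (hdd : d ≤ d') {e : Exp S} (he : closedUnder d e) :
    closedUnder d' e := by
  induction e generalizing d d' with
  | var k => exact lt_of_lt_of_le he hdd
  | app u v ihu ihv => exact ⟨ihu hdd he.1, ihv hdd he.2⟩
  | lam u ih => exact ih (by omega) he
  | constr T c args ih => exact fun i => ih i hdd (he i)
  | seqE u v ihu ihv => exact ⟨ihu hdd he.1, ihv hdd he.2⟩
  | caseE T e alts ihe ihalts => exact ⟨ihe hdd he.1, fun c => ihalts c (by omega) (he.2 c)⟩
  | letrecE n b t ihb iht => exact ⟨fun i => ihb i (by omega) (he.1 i), iht (by omega) he.2⟩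

theorem liftN_lt {d d' : ℕ} {f : ℕ → ℕ} (hf : ∀ k < d, f k < d') (m : ℕ) :
    ∀ k < d + m, liftN m f k < d' + m := by
  intro k hk
  unfold liftN
  split_ifs
  · omega
  · have := hf (k - m) (by omega); omega

theorem closedUnder_rename {d d' : ℕ} {f : ℕ → ℕ} {e : Exp S} (he : closedUnder d e)
    (hf : ∀ k < d, f k < d') : closedUnder d' (rename f e) := by
  induction e generalizing d d' f with
  | var k => exact hf k he
  | app u v ihu ihv => exact ⟨ihu he.1 hf, ihv he.2 hf⟩
  | lam u ih => exact ih he (liftN_lt hf 1)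
  | constr T c args ih => exact fun i => ih i (he i) hf
  | seqE u v ihu ihv => exact ⟨ihu he.1 hf, ihv he.2 hf⟩
  | caseE T e alts ihe ihalts => exact ⟨ihe he.1 hf, fun c => ihalts c (he.2 c) (liftN_lt hf _)⟩
  | letrecE n b t ihb iht =>
      exact ⟨fun i => ihb i (he.1 i) (liftN_lt hf _), iht he.2 (liftN_lt hf _)⟩

theorem lt_of_liftN_lt {d d' : ℕ} {f : ℕ → ℕ} (hf : ∀ k, f k < d' → k < d) (m : ℕ) :
    ∀ k, liftN m f k < d' + m → k < d + m := by
  intro k hk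
  unfold liftN at hk
  split_ifs at hk
  · omega
  · have := hf (k - m) (by omega); omega

theorem closedUnder_of_rename {d d' : ℕ} {f : ℕ → ℕ} {e : Exp S}
    (he : closedUnder d' (rename f e)) (hf : ∀ k, f k < d' → k < d) : closedUnder d e := by
  induction e generalizing d d' f with
  | var k => exact hf k he
  | app u v ihu ihv => exact ⟨ihu he.1 hf, ihv he.2 hf⟩
  | lam u ih => exact ih he (lt_of_liftN_lt hf 1)
  | constr T c args ih => exact fun i => ih i (he i) hf
  | seqE u v ihu ihv => exact ⟨ihu he.1 hf, ihv he.2 hf⟩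
  | caseE T e alts ihe ihalts =>
      exact ⟨ihe he.1 hf, fun c => ihalts c (he.2 c) (lt_of_liftN_lt hf _)⟩
  | letrecE n b t ihb iht =>
      exact ⟨fun i => ihb i (he.1 i) (lt_of_liftN_lt hf _), iht he.2 (lt_of_liftN_lt hf _)⟩

theorem upN_closedUnder {d d' : ℕ} {σ : ℕ → Exp S} (hσ : ∀ k < d, closedUnder d' (σ k))
    (m : ℕ) : ∀ k < d + m, closedUnder (d' + m) (upN m σ k) := by
  intro k hk
  unfold upN
  split_ifs
  · show k < d' + m; omega
  · exact closedUnder_rename (hσ _ (by omega)) (fun j hj => by omega)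

theorem closedUnder_subst {d d' : ℕ} {σ : ℕ → Exp S} {e : Exp S} (he : closedUnder d e)
    (hσ : ∀ k < d, closedUnder d' (σ k)) : closedUnder d' (subst σ e) := by
  induction e generalizing d d' σ with
  | var k => exact hσ k he
  | app u v ihu ihv => exact ⟨ihu he.1 hσ, ihv he.2 hσ⟩
  | lam u ih => exact ih he (upN_closedUnder hσ 1)
  | constr T c args ih => exact fun i => ih i (he i) hσ
  | seqE u v ihu ihv => exact ⟨ihu he.1 hσ, ihv he.2 hσ⟩
  | caseE T e alts ihe ihalts =>
      exact ⟨ihe he.1 hσ, fun c => ihalts c (he.2 c) (upN_closedUnder hσ _)⟩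
  | letrecE n b t ihb iht =>
      exact ⟨fun i => ihb i (he.1 i) (upN_closedUnder hσ _), iht he.2 (upN_closedUnder hσ _)⟩

theorem upN_closedUnder_of_forall {d : ℕ} {σ : ℕ → Exp S} (hσ : ∀ k, closedUnder d (σ k))
    (m : ℕ) : ∀ k, closedUnder (d + m) (upN m σ k) := by
  intro k
  unfold upN
  split_ifs
  · show k < d + m; omega
  · exact closedUnder_rename (hσ _) (fun j hj => by omega)

theorem closedUnder_subst_of_forall {d : ℕ} {σ : ℕ → Exp S} (hσ : ∀ k, closedUnder d (σ k))
    (e : Exp S) : closedUnder d (subst σ e) := by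
  induction e generalizing d σ with
  | var k => exact hσ k
  | app u v ihu ihv => exact ⟨ihu hσ, ihv hσ⟩
  | lam u ih => exact ih (upN_closedUnder_of_forall hσ 1)
  | constr T c args ih => exact fun i => ih i hσ
  | seqE u v ihu ihv => exact ⟨ihu hσ, ihv hσ⟩
  | caseE T e alts ihe ihalts =>
      exact ⟨ihe hσ, fun c => ihalts c (upN_closedUnder_of_forall hσ _)⟩
  | letrecE n b t ihb iht =>
      exact ⟨fun i => ihb i (upN_closedUnder_of_forall hσ _),
        iht (upN_closedUnder_of_forall hσ _)⟩

theorem closed_subst {σ : ℕ → Exp S} (hσ : ∀ k, closed (σ k)) (e : Exp S) :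
    closed (subst σ e) :=
  closedUnder_subst_of_forall hσ e

theorem upN_congr_of_closedUnder {d : ℕ} {σ τ : ℕ → Exp S}
    (h : ∀ k, closedUnder d (σ k) → σ k = τ k) (m : ℕ) :
    ∀ k, closedUnder (d + m) (upN m σ k) → upN m σ k = upN m τ k := by
  intro k hk
  unfold upN at hk ⊢
  split_ifs at hk ⊢
  · rfl
  · rw [h _ (closedUnder_of_rename hk (fun j hj => by omega))]

theorem subst_congr_of_closedUnder {d : ℕ} {σ τ : ℕ → Exp S} {e : Exp S}
    (he : closedUnder d (subst σ e)) (h : ∀ k, closedUnder d (σ k) → σ k = τ k) :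
    subst σ e = subst τ e := by
  induction e generalizing d σ τ with
  | var k => exact h k he
  | app u v ihu ihv => simp only [subst, ihu he.1 h, ihv he.2 h]
  | lam u ih => simp only [subst, ih he (upN_congr_of_closedUnder h 1)]
  | constr T c args ih => simp only [subst, fun i => ih i (he i) h]
  | seqE u v ihu ihv => simp only [subst, ihu he.1 h, ihv he.2 h]
  | caseE T e alts ihe ihalts =>
      simp only [subst, ihe he.1 h, fun c => ihalts c (he.2 c) (upN_congr_of_closedUnder h _)]
  | letrecE n b t ihb iht =>
      simp only [subst, fun i => ihb i (he.1 i) (upN_congr_of_closedUnder h _),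
        iht he.2 (upN_congr_of_closedUnder h _)]

theorem isValue_iff {v : Exp S} :
    isValue v ↔ (∃ u, v = .lam u) ∨ ∃ T c args, v = .constr T c args := by
  cases v <;> simp [isValue]

theorem isValue.subst {v : Exp S} (hv : isValue v) (σ : ℕ → Exp S) : isValue (subst σ v) := by
  cases v <;> trivial

theorem lfree_rename {e : Exp S} (he : lfree e) (f : ℕ → ℕ) : lfree (rename f e) := by
  induction e generalizing f with
  | letrecE => exact he.elim
  | _ => simp_all [rename, lfree]

theorem upN_lfree {σ : ℕ → Exp S} (hσ : ∀ k, lfree (σ k)) (m : ℕ) (k : ℕ) :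
    lfree (upN m σ k) := by
  unfold upN
  split_ifs
  · trivial
  · exact lfree_rename (hσ _) _

theorem lfree_subst {e : Exp S} {σ : ℕ → Exp S} (he : lfree e) (hσ : ∀ k, lfree (σ k)) :
    lfree (subst σ e) := by
  induction e generalizing σ with
  | letrecE => exact he.elim
  | _ => simp_all [subst, lfree, upN_lfree]

theorem Omega_closed : closed (Omega : Exp S) := by
  simp [closed, Omega, closedUnder]

theorem Omega_lfree : lfree (Omega : Exp S) := by
  simp [Omega, lfree]

open Classical in
noncomputable def patchOmega (σ : ℕ → Exp S) : ℕ → Exp S :=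
  fun k => if closed (σ k) then σ k else Omega

theorem patchOmega_closed (σ : ℕ → Exp S) (k : ℕ) : closed (patchOmega σ k) := by
  unfold patchOmega
  split_ifs with h
  exacts [h, Omega_closed]

theorem patchOmega_lfree {σ : ℕ → Exp S} (hσ : ∀ k, lfree (σ k)) (k : ℕ) :
    lfree (patchOmega σ k) := by
  unfold patchOmega
  split_ifs
  exacts [hσ k, Omega_lfree]

theorem subst_patchOmega {σ : ℕ → Exp S} {e : Exp S} (h : closed (subst σ e)) :
    subst (patchOmega σ) e = subst σ e :=
  (subst_congr_of_closedUnder h fun _ hk => (if_pos hk).symm).symm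

theorem openL_of_closed {R : Exp S → Exp S → Prop} {a b : Exp S}
    (h : ∀ σ : ℕ → Exp S, (∀ k, closed (σ k)) → (∀ k, lfree (σ k)) →
      R (subst σ a) (subst σ b)) : openL R a b := by
  intro σ hσ ha hb
  rw [← subst_patchOmega ha, ← subst_patchOmega hb]
  exact h _ (patchOmega_closed σ) (patchOmega_lfree hσ)

theorem cBot_of_closed {a : Exp S}
    (h : ∀ σ : ℕ → Exp S, (∀ k, closed (σ k)) → (∀ k, lfree (σ k)) → ¬ lccConv (subst σ a)) :
    cBot a := by
  intro σ hσ ha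
  rw [← subst_patchOmega ha]
  exact h _ (patchOmega_closed σ) (patchOmega_lfree hσ)

/-! ### Reduction contexts and determinism -/

def compA : ACtx S → ACtx S → ACtx S
  | .hole, B => B
  | .appA A t, B => .appA (compA A B) t
  | .seqA A t, B => .seqA (compA A B) t
  | .caseA T A alts, B => .caseA T (compA A B) alts

theorem plugA_compA (A B : ACtx S) (e : Exp S) :
    plugA (compA A B) e = plugA A (plugA B e) := by
  induction A <;> simp [compA, plugA, *]

def substA (σ : ℕ → Exp S) : ACtx S → ACtx S
  | .hole => .hole
  | .appA A t => .appA (substA σ A) (subst σ t)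
  | .seqA A t => .seqA (substA σ A) (subst σ t)
  | .caseA T A alts => .caseA T (substA σ A) (fun c => subst (upN (S.arity T c) σ) (alts c))

theorem subst_plugA (σ : ℕ → Exp S) (A : ACtx S) (e : Exp S) :
    subst σ (plugA A e) = plugA (substA σ A) (subst σ e) := by
  induction A <;> simp [substA, plugA, subst, *]

theorem lfree_plugA_of {A : ACtx S} {r r' : Exp S} (h : lfree (plugA A r))
    (hr : lfree r → lfree r') : lfree (plugA A r') := by
  induction A with
  | hole => exact hr h
  | appA A t ih => exact ⟨ih h.1, h.2⟩
  | seqA A t ih => exact ⟨ih h.1, h.2⟩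
  | caseA T A alts ih => exact ⟨ih h.1, h.2⟩

theorem closedUnder_plugA_of {d : ℕ} {A : ACtx S} {r r' : Exp S}
    (h : closedUnder d (plugA A r)) (hr : closedUnder d r → closedUnder d r') :
    closedUnder d (plugA A r') := by
  induction A with
  | hole => exact hr h
  | appA A t ih => exact ⟨ih h.1, h.2⟩
  | seqA A t ih => exact ⟨ih h.1, h.2⟩
  | caseA T A alts ih => exact ⟨ih h.1, h.2⟩

theorem eq_hole_of_isValue_plugA {A : ACtx S} {e : Exp S} (h : isValue (plugA A e)) :
    A = .hole := by
  cases A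
  · rfl
  all_goals exact h.elim

def isRedex (r : Exp S) : Prop := ∃ r', LccBase r r'

/-- the irreducible non-values other than variables -/
def Stuck (e : Exp S) : Prop :=
  (∃ T c args t, e = .app (.constr T c args) t) ∨
  (∃ T v alts, e = .caseE T v alts ∧ isValue v ∧ ∀ c args, v ≠ .constr T c args)

def Head (r : Exp S) : Prop := isRedex r ∨ Stuck r ∨ ∃ k, r = .var k

theorem Head.not_isValue {r : Exp S} (h : Head r) : ¬ isValue r := by
  rcases h with ⟨r', hb⟩ | ⟨⟨_, _, _, _, rfl⟩ | ⟨_, _, _, rfl, _⟩⟩ | ⟨_, rfl⟩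
  · cases hb <;> exact id
  all_goals exact id

theorem Head.isValue_of_app {u t : Exp S} (h : Head (.app u t)) : isValue u := by
  rcases h with ⟨r', hb⟩ | ⟨⟨_, _, _, _, h⟩ | ⟨_, _, _, h, _⟩⟩ | ⟨_, h⟩
  · cases hb; trivial
  · cases h; trivial
  all_goals cases h

theorem Head.isValue_of_seqE {u t : Exp S} (h : Head (.seqE u t)) : isValue u := by
  rcases h with ⟨r', hb⟩ | ⟨⟨_, _, _, _, h⟩ | ⟨_, _, _, h, _⟩⟩ | ⟨_, h⟩
  · cases hb; assumption
  all_goals cases h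

theorem Head.isValue_of_caseE {T : S.TyName} {u : Exp S} {alts : (c : S.CName T) → Exp S}
    (h : Head (.caseE T u alts)) : isValue u := by
  rcases h with ⟨r', hb⟩ | ⟨⟨_, _, _, _, h⟩ | ⟨_, _, _, h, hv, _⟩⟩ | ⟨_, h⟩
  · cases hb; trivial
  · cases h
  · cases h; exact hv
  · cases h

theorem Head.eq_hole {A : ACtx S} {r : Exp S} (h : Head (plugA A r)) (hr : Head r) :
    A = .hole := by
  cases A with
  | hole => rfl
  | appA B t =>
      cases eq_hole_of_isValue_plugA h.isValue_of_app
      exact absurd h.isValue_of_app hr.not_isValue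
  | seqA B t =>
      cases eq_hole_of_isValue_plugA h.isValue_of_seqE
      exact absurd h.isValue_of_seqE hr.not_isValue
  | caseA T B alts =>
      cases eq_hole_of_isValue_plugA h.isValue_of_caseE
      exact absurd h.isValue_of_caseE hr.not_isValue

theorem plugA_head_inj {A A' : ACtx S} {r r' : Exp S} (heq : plugA A r = plugA A' r')
    (hr : Head r) (hr' : Head r') : A = A' ∧ r = r' := by
  induction A generalizing A' with
  | hole =>
      cases (show Head (plugA A' r') from heq ▸ hr).eq_hole hr'
      exact ⟨rfl, heq⟩
  | appA B t ih =>
      cases A' with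
      | hole => cases (show Head (plugA (.appA B t) r) from heq ▸ hr').eq_hole hr
      | appA B' t' =>
          obtain ⟨h1, rfl⟩ := Exp.app.inj heq
          obtain ⟨rfl, rfl⟩ := ih h1
          exact ⟨rfl, rfl⟩
      | _ => simp [plugA] at heq
  | seqA B t ih =>
      cases A' with
      | hole => cases (show Head (plugA (.seqA B t) r) from heq ▸ hr').eq_hole hr
      | seqA B' t' =>
          obtain ⟨h1, rfl⟩ := Exp.seqE.inj heq
          obtain ⟨rfl, rfl⟩ := ih h1
          exact ⟨rfl, rfl⟩
      | _ => simp [plugA] at heq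
  | caseA T B alts ih =>
      cases A' with
      | hole => cases (show Head (plugA (.caseA T B alts) r) from heq ▸ hr').eq_hole hr
      | caseA T' B' alts' =>
          obtain ⟨rfl, h1, h2⟩ := Exp.caseE.inj heq
          obtain ⟨rfl, rfl⟩ := ih h1
          cases h2
          exact ⟨rfl, rfl⟩
      | _ => simp [plugA] at heq

local notation:50 a:51 " ⟶* " b:51 => Relation.ReflTransGen lccStep a b

theorem LccBase.det {r a b : Exp S} (h1 : LccBase r a) (h2 : LccBase r b) : a = b := by
  cases h1 <;> cases h2 <;> rfl

theorem lccStep_det {a b c : Exp S} (h1 : lccStep a b) (h2 : lccStep a c) : b = c := by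
  obtain ⟨A, r, r', hb, rfl, rfl⟩ := h1
  obtain ⟨A2, r2, r2', hb2, heq, rfl⟩ := h2
  obtain ⟨rfl, rfl⟩ := plugA_head_inj heq (Or.inl ⟨_, hb⟩) (Or.inl ⟨_, hb2⟩)
  rw [hb.det hb2]

theorem not_lccStep_of_isValue {v x : Exp S} (hv : isValue v) : ¬ lccStep v x := by
  rintro ⟨A, r, r', hb, rfl, rfl⟩
  cases eq_hole_of_isValue_plugA hv
  exact Head.not_isValue (Or.inl ⟨_, hb⟩) hv

theorem not_lccStep_plugA {A : ACtx S} {r x : Exp S} (hr : Head r) (hnr : ¬ isRedex r) :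
    ¬ lccStep (plugA A r) x := by
  rintro ⟨A2, r2, r2', hb, heq, rfl⟩
  obtain ⟨rfl, rfl⟩ := plugA_head_inj heq hr (Or.inl ⟨_, hb⟩)
  exact hnr ⟨_, hb⟩

theorem Stuck.not_isRedex {r : Exp S} (h : Stuck r) : ¬ isRedex r := by
  rintro ⟨r', hb⟩
  rcases h with ⟨T, c, args, t, rfl⟩ | ⟨T, v, alts, rfl, -, hne⟩
  · cases hb
  · cases hb with
    | ncase => exact hne _ _ rfl

theorem lccStep_plugA {a b : Exp S} (A : ACtx S) (h : lccStep a b) :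
    lccStep (plugA A a) (plugA A b) := by
  obtain ⟨B, r, r', hb, rfl, rfl⟩ := h
  exact ⟨compA A B, r, r', hb, (plugA_compA A B r).symm, (plugA_compA A B r').symm⟩

theorem steps_plugA (A : ACtx S) {a b : Exp S} (h : a ⟶* b) : plugA A a ⟶* plugA A b :=
  h.lift (plugA A) fun _ _ => lccStep_plugA A

inductive StepN : ℕ → Exp S → Exp S → Prop
  | refl (e) : StepN 0 e e
  | head {n a b c} : lccStep a b → StepN n b c → StepN (n + 1) a c

theorem StepN.steps {n : ℕ} {a b : Exp S} (h : StepN n a b) : a ⟶* b := by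
  induction h with
  | refl => exact .refl
  | head hs _ ih => exact .head hs ih

theorem exists_stepN {a b : Exp S} (h : a ⟶* b) : ∃ n, StepN n a b := by
  induction h using Relation.ReflTransGen.head_induction_on with
  | refl => exact ⟨0, .refl b⟩
  | head hs _ ih =>
      obtain ⟨n, hn⟩ := ih
      exact ⟨n + 1, .head hs hn⟩

theorem StepN.of_lccStep {n : ℕ} {a b v : Exp S} (h : StepN n a v) (hv : isValue v)
    (hs : lccStep a b) : ∃ m, n = m + 1 ∧ StepN m b v := by
  cases h with
  | refl => exact absurd hs (not_lccStep_of_isValue hv)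
  | head hs' hrest => exact ⟨_, rfl, lccStep_det hs hs' ▸ hrest⟩

theorem StepN.eq_of_isValue {n : ℕ} {v b : Exp S} (h : StepN n v b) (hv : isValue v) :
    n = 0 ∧ b = v := by
  cases h with
  | refl => exact ⟨rfl, rfl⟩
  | head hs _ => exact absurd hs (not_lccStep_of_isValue hv)

theorem lccConv_of_isValue {v : Exp S} (hv : isValue v) : lccConv v := ⟨v, .refl, hv⟩

theorem lccConv_iff_of_steps {a b : Exp S} (h : a ⟶* b) : lccConv a ↔ lccConv b := by
  constructor
  · rintro ⟨v, hav, hv⟩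
    have hdet : Relator.RightUnique (lccStep (S := S)) := fun _ _ _ => lccStep_det
    rcases Relation.ReflTransGen.total_of_right_unique hdet h hav with hbv | hvb
    · exact ⟨v, hbv, hv⟩
    · rcases hvb.cases_head with rfl | ⟨x, hx, -⟩
      · exact lccConv_of_isValue hv
      · exact absurd hx (not_lccStep_of_isValue hv)
  · rintro ⟨v, hbv, hv⟩
    exact ⟨v, h.trans hbv, hv⟩

theorem not_lccConv_plugA {A : ACtx S} {r : Exp S} (hr : Head r) (hnr : ¬ isRedex r) :
    ¬ lccConv (plugA A r) := by
  rintro ⟨v, hrv, hv⟩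
  rcases hrv.cases_head with rfl | ⟨x, hx, -⟩
  · cases eq_hole_of_isValue_plugA hv
    exact hr.not_isValue hv
  · exact not_lccStep_plugA hr hnr hx

theorem Stuck.not_lccConv {A : ACtx S} {r : Exp S} (h : Stuck r) : ¬ lccConv (plugA A r) :=
  not_lccConv_plugA (Or.inr (Or.inl h)) h.not_isRedex

theorem not_lccConv_of_lccStep_self {e : Exp S} (h : lccStep e e) : ¬ lccConv e := by
  rintro ⟨v, hev, hv⟩
  obtain ⟨n, hn⟩ := exists_stepN hev
  induction n with
  | zero => cases hn; exact not_lccStep_of_isValue hv h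
  | succ n ih =>
      obtain ⟨m, hm, hmv⟩ := hn.of_lccStep hv h
      exact ih (Nat.succ.inj hm ▸ hmv)

theorem lccStep_Omega : lccStep (Omega : Exp S) Omega :=
  ⟨.hole, Omega, Omega, .nbeta, rfl, rfl⟩

theorem not_lccConv_plugA_Omega (A : ACtx S) : ¬ lccConv (plugA A Omega) :=
  not_lccConv_of_lccStep_self (lccStep_plugA A lccStep_Omega)

/-! ### Progress -/

theorem isRedex_or_stuck_app {w : Exp S} (hw : isValue w) (t : Exp S) :
    isRedex (.app w t) ∨ Stuck (.app w t) := by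
  rcases isValue_iff.mp hw with ⟨u, rfl⟩ | ⟨T, c, args, rfl⟩
  · exact Or.inl ⟨_, .nbeta⟩
  · exact Or.inr (Or.inl ⟨T, c, args, t, rfl⟩)

theorem isRedex_seqE {w : Exp S} (hw : isValue w) (t : Exp S) : isRedex (.seqE w t) :=
  ⟨_, .nseq hw⟩

theorem isRedex_or_stuck_caseE {T : S.TyName} {w : Exp S} (hw : isValue w)
    (alts : (c : S.CName T) → Exp S) :
    isRedex (.caseE T w alts) ∨ Stuck (.caseE T w alts) := by
  by_cases h : ∃ c args, w = .constr T c args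
  · obtain ⟨c, args, rfl⟩ := h
    exact Or.inl ⟨_, .ncase⟩
  · exact Or.inr (Or.inr ⟨T, w, alts, rfl, hw, fun c args hc => h ⟨c, args, hc⟩⟩)

theorem plugA_isValue_cases (A : ACtx S) {w : Exp S} (hw : isValue w) :
    A = .hole ∨ ∃ B r, (isRedex r ∨ Stuck r) ∧ plugA A w = plugA B r := by
  induction A with
  | hole => exact Or.inl rfl
  | appA A t ih =>
      refine Or.inr ?_
      rcases ih with rfl | ⟨B, r, hr, heq⟩
      · exact ⟨.hole, _, isRedex_or_stuck_app hw t, rfl⟩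
      · exact ⟨.appA B t, r, hr, by simp only [plugA, heq]⟩
  | seqA A t ih =>
      refine Or.inr ?_
      rcases ih with rfl | ⟨B, r, hr, heq⟩
      · exact ⟨.hole, _, Or.inl (isRedex_seqE hw t), rfl⟩
      · exact ⟨.seqA B t, r, hr, by simp only [plugA, heq]⟩
  | caseA T A alts ih =>
      refine Or.inr ?_
      rcases ih with rfl | ⟨B, r, hr, heq⟩
      · exact ⟨.hole, _, isRedex_or_stuck_caseE hw alts, rfl⟩
      · exact ⟨.caseA T B alts, r, hr, by simp only [plugA, heq]⟩

theorem progress {e : Exp S} (he : lfree e) :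
    isValue e ∨ (∃ A k, e = plugA A (.var k)) ∨
      ∃ A r, (isRedex r ∨ Stuck r) ∧ e = plugA A r := by
  induction e with
  | var k => exact Or.inr (Or.inl ⟨.hole, k, rfl⟩)
  | lam u => exact Or.inl trivial
  | constr T c args => exact Or.inl trivial
  | app u v ihu =>
      rcases ihu he.1 with hu | ⟨A, k, rfl⟩ | ⟨A, r, hr, rfl⟩
      · exact Or.inr (Or.inr ⟨.hole, _, isRedex_or_stuck_app hu v, rfl⟩)
      · exact Or.inr (Or.inl ⟨.appA A v, k, rfl⟩)
      · exact Or.inr (Or.inr ⟨.appA A v, r, hr, rfl⟩)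
  | seqE u v ihu =>
      rcases ihu he.1 with hu | ⟨A, k, rfl⟩ | ⟨A, r, hr, rfl⟩
      · exact Or.inr (Or.inr ⟨.hole, _, Or.inl (isRedex_seqE hu v), rfl⟩)
      · exact Or.inr (Or.inl ⟨.seqA A v, k, rfl⟩)
      · exact Or.inr (Or.inr ⟨.seqA A v, r, hr, rfl⟩)
  | caseE T u alts ihu =>
      rcases ihu he.1 with hu | ⟨A, k, rfl⟩ | ⟨A, r, hr, rfl⟩
      · exact Or.inr (Or.inr ⟨.hole, _, isRedex_or_stuck_caseE hu alts, rfl⟩)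
      · exact Or.inr (Or.inl ⟨.caseA T A alts, k, rfl⟩)
      · exact Or.inr (Or.inr ⟨.caseA T A alts, r, hr, rfl⟩)
  | letrecE => exact he.elim

theorem subst_rename_of_cancel {τ : ℕ → Exp S} {f : ℕ → ℕ} (h : ∀ j, τ (f j) = .var j)
    (e : Exp S) : subst τ (rename f e) = e := by
  rw [subst_rename, funext h, subst_var]

theorem subst_consSub (σ : ℕ → Exp S) (t u : Exp S) :
    subst σ (subst (consSub t) u) = subst (consSub (subst σ t)) (subst (upN 1 σ) u) := by
  rw [subst_subst, subst_subst]
  congr 1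
  funext k
  cases k with
  | zero => rfl
  | succ k =>
      show σ k = subst (consSub (subst σ t)) (rename (· + 1) (σ k))
      rw [subst_rename_of_cancel (f := (· + 1)) (τ := consSub _) fun _ => rfl]

theorem instSub_lt {m k : ℕ} (args : Fin m → Exp S) (h : k < m) :
    instSub args k = args ⟨k, h⟩ :=
  dif_pos h

theorem subst_instSub {m : ℕ} (σ : ℕ → Exp S) (args : Fin m → Exp S) (e : Exp S) :
    subst σ (subst (instSub args) e) =
      subst (instSub (fun i => subst σ (args i))) (subst (upN m σ) e) := by
  rw [subst_subst, subst_subst]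
  congr 1
  funext k
  by_cases h : k < m
  · simp only [instSub_lt _ h, upN, if_pos h, subst]
  · have cancel (j : ℕ) : instSub (fun i => subst σ (args i)) (j + m) = .var j := by
      simp [instSub]
    simp only [instSub, upN, dif_neg h, if_neg h, subst, subst_rename_of_cancel cancel]

theorem LccBase.subst {r r' : Exp S} (σ : ℕ → Exp S) (h : LccBase r r') :
    LccBase (Core.subst σ r) (Core.subst σ r') := by
  cases h with
  | nbeta => rw [subst_consSub]; exact .nbeta
  | nseq hv => exact .nseq (hv.subst σ)
  | ncase => rw [subst_instSub]; exact .ncase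

theorem lccStep_subst {a b : Exp S} (σ : ℕ → Exp S) (h : lccStep a b) :
    lccStep (subst σ a) (subst σ b) := by
  obtain ⟨A, r, r', hb, rfl, rfl⟩ := h
  exact ⟨substA σ A, _, _, hb.subst σ, subst_plugA σ A r, subst_plugA σ A r'⟩

theorem lccConv.subst {e : Exp S} (σ : ℕ → Exp S) (h : lccConv e) :
    lccConv (Core.subst σ e) := by
  obtain ⟨v, hev, hv⟩ := h
  exact ⟨_, hev.lift (Core.subst σ) fun _ _ => lccStep_subst σ, hv.subst σ⟩

theorem Stuck.subst {r : Exp S} (σ : ℕ → Exp S) (h : Stuck r) : Stuck (Core.subst σ r) := by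
  rcases h with ⟨T, c, args, t, rfl⟩ | ⟨T, v, alts, rfl, hv, hne⟩
  · exact Or.inl ⟨T, c, _, _, rfl⟩
  · refine Or.inr ⟨T, _, _, rfl, hv.subst σ, fun c args heq => ?_⟩
    rcases isValue_iff.mp hv with ⟨u, rfl⟩ | ⟨T', c', args', rfl⟩
    · cases heq
    · obtain ⟨rfl, rfl, -⟩ := Exp.constr.inj heq
      exact hne _ _ rfl

theorem LccBase.closedUnder {d : ℕ} {r r' : Exp S} (h : LccBase r r')
    (hr : closedUnder d r) : closedUnder d r' := by
  cases h with
  | nbeta =>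
      refine closedUnder_subst hr.1 fun k hk => ?_
      cases k with
      | zero => exact hr.2
      | succ k => show k < d; omega
  | nseq _ => exact hr.2
  | @ncase T c args alts =>
      refine closedUnder_subst (hr.2 c) fun k hk => ?_
      by_cases h : k < S.arity T c
      · rw [instSub_lt _ h]; exact hr.1 _
      · simp only [instSub, dif_neg h, Core.closedUnder]; omega

theorem LccBase.lfree {r r' : Exp S} (h : LccBase r r') (hr : lfree r) : lfree r' := by
  cases h with
  | nbeta => exact lfree_subst hr.1 fun k => by cases k <;> first | exact hr.2 | trivial
  | nseq _ => exact hr.2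
  | ncase =>
      refine lfree_subst (hr.2 _) fun k => ?_
      unfold instSub
      split_ifs
      exacts [hr.1 _, trivial]

theorem lccStep.closed {a b : Exp S} (h : lccStep a b) (ha : closed a) : closed b := by
  obtain ⟨A, r, r', hb, rfl, rfl⟩ := h
  exact closedUnder_plugA_of ha hb.closedUnder

theorem lccStep.lfree {a b : Exp S} (h : lccStep a b) (ha : lfree a) : lfree b := by
  obtain ⟨A, r, r', hb, rfl, rfl⟩ := h
  exact lfree_plugA_of ha hb.lfree

theorem closed_of_steps {a b : Exp S} (h : a ⟶* b) (ha : closed a) : closed b := by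
  induction h with
  | refl => exact ha
  | tail _ hs ih => exact hs.closed ih

theorem lfree_of_steps {a b : Exp S} (h : a ⟶* b) (ha : lfree a) : lfree b := by
  induction h with
  | refl => exact ha
  | tail _ hs ih => exact hs.lfree ih

theorem not_lccConv_plugA_var (A : ACtx S) (k : ℕ) : ¬ lccConv (plugA A (.var k)) :=
  not_lccConv_plugA (Or.inr (Or.inr ⟨k, rfl⟩)) fun ⟨_, h⟩ => nomatch h

theorem progress_of_lccConv {x : Exp S} (hl : lfree x) {A : ACtx S} {σ : ℕ → Exp S}
    (h : lccConv (plugA A (subst σ x))) :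
    isValue x ∨ (∃ B k, x = plugA B (.var k)) ∨ ∃ x', lccStep x x' := by
  rcases progress hl with hv | hvar | ⟨B, r, ⟨r', hb⟩ | hr, rfl⟩
  · exact Or.inl hv
  · exact Or.inr (Or.inl hvar)
  · exact Or.inr (Or.inr ⟨_, B, r, r', hb, rfl, rfl⟩)
  · rw [subst_plugA, ← plugA_compA] at h
    exact absurd h (hr.subst σ).not_lccConv

theorem exists_stepN_of_plugA {v : Exp S} (hv : isValue v) :
    ∀ (n : ℕ) (A : ACtx S) (s : Exp S), StepN n (plugA A s) v → lfree s →
      ∃ k m w, k + m = n ∧ StepN k s w ∧ isValue w ∧ StepN m (plugA A w) v := by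
  intro n
  induction n using Nat.strong_induction_on with
  | _ n ih =>
  intro A s hn hl
  have hconv : lccConv (plugA A (subst .var s)) := by
    rw [subst_var]
    exact ⟨v, hn.steps, hv⟩
  rcases progress_of_lccConv hl hconv with hs | ⟨B, k, rfl⟩ | ⟨s', hs'⟩
  · exact ⟨0, n, s, by omega, .refl s, hs, hn⟩
  · rw [← plugA_compA] at hn
    exact absurd ⟨v, hn.steps, hv⟩ (not_lccConv_plugA_var _ k)
  · obtain ⟨m, rfl, hm⟩ := hn.of_lccStep hv (lccStep_plugA A hs')
    obtain ⟨k, m', w, rfl, hk, hw, hm'⟩ := ih m (by omega) A s' hm (hs'.lfree hl)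
    exact ⟨k + 1, m', w, by omega, .head hs' hk, hw, hm'⟩

theorem lccConv_of_lccConv_subst_Omega {e : Exp S} (hl : lfree e)
    (h : lccConv (subst (fun _ => Omega) e)) : lccConv e := by
  obtain ⟨v, hsteps, hv⟩ := h
  obtain ⟨n, hn⟩ := exists_stepN hsteps
  clear hsteps
  induction n using Nat.strong_induction_on generalizing e with
  | _ n ih =>
  have hconv : lccConv (plugA .hole (subst (fun _ => Omega) e)) := ⟨v, hn.steps, hv⟩
  rcases progress_of_lccConv hl hconv with he | ⟨A, k, rfl⟩ | ⟨e', he'⟩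
  · exact lccConv_of_isValue he
  · rw [subst_plugA] at hconv
    exact absurd hconv (not_lccConv_plugA_Omega _)
  · obtain ⟨m, rfl, hm⟩ := hn.of_lccStep hv (lccStep_subst _ he')
    exact (lccConv_iff_of_steps (.single he')).mpr (ih m (by omega) (he'.lfree hl) hm)

def pad (σ : ℕ → Exp S) (d : ℕ) : ℕ → Exp S := fun k => if k < d then σ k else .var (k - d)

/-- A convergent closed instance only inspects finitely many entries of the substitution.
This replaces abstracting all free variables, which is impossible in general: a `case` has an
alternative for every constructor of its type, so an expression may have infinitely many. -/
theorem exists_lccConv_subst_pad {σ : ℕ → Exp S} (hσc : ∀ k, closed (σ k))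
    (hσl : ∀ k, lfree (σ k)) {v : Exp S} (hv : isValue v) :
    ∀ (n : ℕ) (x : Exp S), lfree x → StepN n (subst σ x) v →
      ∃ d0, ∀ d ≥ d0, lccConv (subst (pad σ d) x) := by
  intro n
  induction n using Nat.strong_induction_on with
  | _ n ih =>
  intro x hl hn
  have hconv : lccConv (plugA .hole (subst σ x)) := ⟨v, hn.steps, hv⟩
  rcases progress_of_lccConv hl hconv with hx | ⟨A, k, rfl⟩ | ⟨x', hx'⟩
  · exact ⟨0, fun d _ => lccConv_of_isValue (hx.subst _)⟩
  · -- `σ k` evaluates to some `w`; then either `A` is the hole or `A[w]` makes a step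
    rw [subst_plugA] at hn
    obtain ⟨k1, m1, w, rfl, hk1, hw, hm1⟩ := exists_stepN_of_plugA hv _ _ _ hn (hσl k)
    have hwc : closed w := closed_of_steps hk1.steps (hσc k)
    have hpad (d : ℕ) (hd : k < d) :
        subst (pad σ d) (plugA A (.var k)) ⟶* subst (pad σ d) (plugA A w) := by
      rw [subst_plugA, subst_plugA, subst_closed hwc]
      exact steps_plugA _ (by simpa only [subst, pad, if_pos hd] using hk1.steps)
    have hAw : StepN m1 (subst σ (plugA A w)) v := by rwa [subst_plugA, subst_closed hwc]
    rcases plugA_isValue_cases A hw with rfl | ⟨B, r, ⟨r', hb⟩ | hr, heq⟩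
    · exact ⟨k + 1, fun d hd =>
        (lccConv_iff_of_steps (hpad d (by omega))).mpr (lccConv_of_isValue (hw.subst _))⟩
    · have hstep : lccStep (plugA A w) (plugA B r') := heq ▸ ⟨B, r, r', hb, rfl, rfl⟩
      obtain ⟨m2, rfl, hm2⟩ := hAw.of_lccStep hv (lccStep_subst σ hstep)
      have hl' : lfree (plugA B r') :=
        hstep.lfree (lfree_plugA_of hl fun _ => lfree_of_steps hk1.steps (hσl k))
      obtain ⟨d0, hd0⟩ := ih m2 (by omega) _ hl' hm2
      refine ⟨max d0 (k + 1), fun d hd => ?_⟩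
      rw [lccConv_iff_of_steps ((hpad d (by omega)).tail (lccStep_subst _ hstep))]
      exact hd0 d (by omega)
    · have hconv' : lccConv (subst σ (plugA B r)) := heq ▸ ⟨v, hAw.steps, hv⟩
      rw [subst_plugA] at hconv'
      exact absurd hconv' (hr.subst σ).not_lccConv
  · obtain ⟨m, rfl, hm⟩ := hn.of_lccStep hv (lccStep_subst σ hx')
    obtain ⟨d0, hd0⟩ := ih m (by omega) x' (hx'.lfree hl) hm
    exact ⟨d0, fun d hd =>
      (lccConv_iff_of_steps (.single (lccStep_subst _ hx'))).mpr (hd0 d hd)⟩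

/-! ### Applicative similarity -/

theorem gfpRel_coinduct {α : Type*} {F : (α → α → Prop) → α → α → Prop} {η : α → α → Prop}
    (hη : ∀ x y, η x y → F η x y) {a b : α} (h : η a b) : gfpRel F a b :=
  ⟨η, hη, h⟩

theorem gfpRel_unfold {α : Type*} {F : (α → α → Prop) → α → α → Prop}
    (hF : ∀ η η' : α → α → Prop, (∀ x y, η x y → η' x y) → ∀ x y, F η x y → F η' x y)
    {a b : α} (h : gfpRel F a b) : F (gfpRel F) a b := by
  obtain ⟨η, hη, hab⟩ := h
  exact hF η _ (fun x y hxy => ⟨η, hη, hxy⟩) a b (hη a b hab)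

theorem Flcc_mono (η η' : Exp S → Exp S → Prop) (h : ∀ x y, η x y → η' x y) (s t : Exp S)
    (hF : Flcc η s t) : Flcc η' s t := by
  refine ⟨fun s' hs' => ?_, fun T c args hs => ?_⟩
  · rcases hF.1 s' hs' with ⟨t', ht', hst⟩ | hbot
    · exact Or.inl ⟨t', ht', fun σ hσ h1 h2 => h _ _ (hst σ hσ h1 h2)⟩
    · exact Or.inr hbot
  · obtain ⟨targs, ht, hargs⟩ := hF.2 T c args hs
    exact ⟨targs, ht, fun i => h _ _ (hargs i)⟩

theorem simLcc.unfold {s t : Exp S} (h : simLcc s t) : Flcc simLcc s t :=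
  gfpRel_unfold Flcc_mono h

theorem simLcc_refl (a : Exp S) : simLcc a a := by
  refine gfpRel_coinduct (η := Eq) ?_ rfl
  rintro x _ rfl
  exact ⟨fun s' hs' => Or.inl ⟨s', hs', fun _ _ _ _ => rfl⟩,
    fun T c args h => ⟨args, h, fun _ => rfl⟩⟩

theorem simLcc.lccConv {s t : Exp S} (h : simLcc s t) (hs : lccConv s) : lccConv t := by
  obtain ⟨v, hsv, hv⟩ := hs
  rcases isValue_iff.mp hv with ⟨u, rfl⟩ | ⟨T, c, args, rfl⟩
  · rcases h.unfold.1 u ⟨hsv, hv⟩ with ⟨_, ht, -⟩ | ⟨_, _, _, ht, -⟩ <;> exact ⟨_, ht⟩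
  · obtain ⟨_, ht, -⟩ := h.unfold.2 T c args ⟨hsv, hv⟩
    exact ⟨_, ht⟩

theorem openL_comp {R R' : Exp S → Exp S → Prop} {a b c : Exp S} (hab : openL R a b)
    (hbc : openL R' b c) : openL (Relation.Comp R R') a c :=
  openL_of_closed fun σ hσc hσl =>
    ⟨_, hab σ hσl (closed_subst hσc a) (closed_subst hσc b),
      hbc σ hσl (closed_subst hσc b) (closed_subst hσc c)⟩

theorem cBot_of_openL_simLcc {a b : Exp S} (hab : openL simLcc a b) (hb : cBot b) : cBot a :=
  cBot_of_closed fun σ hσc hσl ha =>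
    hb σ hσl (closed_subst hσc b)
      ((hab σ hσl (closed_subst hσc a) (closed_subst hσc b)).lccConv ha)

theorem simLcc_trans {a b c : Exp S} (hab : simLcc a b) (hbc : simLcc b c) : simLcc a c := by
  refine gfpRel_coinduct (η := Relation.Comp simLcc simLcc) ?_ ⟨b, hab, hbc⟩
  rintro x z ⟨y, hxy, hyz⟩
  refine ⟨fun s' hs' => ?_, fun T c args hx => ?_⟩
  · rcases hxy.unfold.1 s' hs' with ⟨t', hy, hst⟩ | ⟨T, c, targs, hy, hbot⟩
    · rcases hyz.unfold.1 t' hy with ⟨u', hz, htu⟩ | ⟨T, c, uargs, hz, hbot⟩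
      · exact Or.inl ⟨u', hz, openL_comp hst htu⟩
      · exact Or.inr ⟨T, c, uargs, hz, cBot_of_openL_simLcc hst hbot⟩
    · obtain ⟨uargs, hz, -⟩ := hyz.unfold.2 T c targs hy
      exact Or.inr ⟨T, c, uargs, hz, hbot⟩
  · obtain ⟨targs, hy, hargs⟩ := hxy.unfold.2 T c args hx
    obtain ⟨uargs, hz, hargs'⟩ := hyz.unfold.2 T c targs hy
    exact ⟨uargs, hz, fun i => ⟨targs i, hargs i, hargs' i⟩⟩

theorem openL_simLcc_refl (a : Exp S) : openL simLcc a a :=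
  fun _ _ _ _ => simLcc_refl _

theorem openL_simLcc_trans {a b c : Exp S} (hab : openL simLcc a b) (hbc : openL simLcc b c) :
    openL simLcc a c := fun σ hσ ha hc =>
  let ⟨_, h1, h2⟩ := openL_comp hab hbc σ hσ ha hc
  simLcc_trans h1 h2

theorem openL_of_closed_of_rel {R : Exp S → Exp S → Prop} {a b : Exp S} (ha : closed a)
    (hb : closed b) (h : R a b) : openL R a b := by
  intro σ _ _ _
  rwa [subst_closed ha, subst_closed hb]

theorem openL.subst {R : Exp S → Exp S → Prop} {a b : Exp S} (h : openL R a b)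
    {ρ : ℕ → Exp S} (hρ : ∀ k, lfree (ρ k)) : openL R (subst ρ a) (subst ρ b) := by
  intro σ hσ h1 h2
  simp only [subst_subst] at h1 h2 ⊢
  exact h _ (fun k => lfree_subst (hρ k) hσ) h1 h2

theorem openL.rename {R : Exp S → Exp S → Prop} {a b : Exp S} (h : openL R a b)
    (f : ℕ → ℕ) : openL R (rename f a) (rename f b) := by
  rw [rename_eq_subst, rename_eq_subst]
  exact h.subst fun _ => trivial

/-! ### Completeness -/

def lfreeA : ACtx S → Prop
  | .hole => True
  | .appA A t => lfreeA A ∧ lfree t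
  | .seqA A t => lfreeA A ∧ lfree t
  | .caseA _ A alts => lfreeA A ∧ ∀ c, lfree (alts c)

def closedA : ACtx S → Prop
  | .hole => True
  | .appA A t => closedA A ∧ closed t
  | .seqA A t => closedA A ∧ closed t
  | .caseA T A alts => closedA A ∧ ∀ c, closedUnder (S.arity T c) (alts c)

theorem lfreeA_compA {A B : ACtx S} (hA : lfreeA A) (hB : lfreeA B) : lfreeA (compA A B) := by
  induction A with
  | hole => exact hB
  | appA A t ih => exact ⟨ih hA.1, hA.2⟩
  | seqA A t ih => exact ⟨ih hA.1, hA.2⟩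
  | caseA T A alts ih => exact ⟨ih hA.1, hA.2⟩

theorem closedA_compA {A B : ACtx S} (hA : closedA A) (hB : closedA B) :
    closedA (compA A B) := by
  induction A with
  | hole => exact hB
  | appA A t ih => exact ⟨ih hA.1, hA.2⟩
  | seqA A t ih => exact ⟨ih hA.1, hA.2⟩
  | caseA T A alts ih => exact ⟨ih hA.1, hA.2⟩

theorem substA_of_closedA {A : ACtx S} (hA : closedA A) (σ : ℕ → Exp S) : substA σ A = A := by
  induction A with
  | hole => rfl
  | appA A t ih => simp only [substA, ih hA.1, subst_closed hA.2]
  | seqA A t ih => simp only [substA, ih hA.1, subst_closed hA.2]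
  | caseA T A alts ih =>
      simp only [substA, ih hA.1]
      congr 1
      funext c
      exact subst_eq_self (hA.2 c) fun k hk => if_pos hk

/-- the context `A[C]` -/
def wrapA : ACtx S → Ctx S → Ctx S
  | .hole, C => C
  | .appA A t, C => .appL (wrapA A C) t
  | .seqA A t, C => .seqL (wrapA A C) t
  | .caseA T A alts, C => .caseScrut T (wrapA A C) alts

theorem plugC_wrapA (A : ACtx S) (C : Ctx S) (e : Exp S) :
    plugC (wrapA A C) e = plugA A (plugC C e) := by
  induction A <;> simp [wrapA, plugC, plugA, *]

theorem lfreeCtx_wrapA {A : ACtx S} {C : Ctx S} (hA : lfreeA A) (hC : lfreeCtx C) :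
    lfreeCtx (wrapA A C) := by
  induction A with
  | hole => exact hC
  | appA A t ih => exact ⟨ih hA.1, hA.2⟩
  | seqA A t ih => exact ⟨ih hA.1, hA.2⟩
  | caseA T A alts ih => exact ⟨ih hA.1, hA.2⟩

def lamCtx : ℕ → Ctx S
  | 0 => .hole
  | d + 1 => .lamC (lamCtx d)

theorem plugC_lamCtx (d : ℕ) (e : Exp S) : plugC (lamCtx d) e = lamN d e := by
  induction d <;> simp [lamCtx, plugC, lamN, *]

theorem lfreeCtx_lamCtx (d : ℕ) : lfreeCtx (lamCtx d : Ctx S) := by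
  induction d with
  | zero => trivial
  | succ d ih => exact ih

/-- the application context `[·] (σ (d-1)) … (σ 0)` -/
def appsCtx (σ : ℕ → Exp S) : ℕ → ACtx S
  | 0 => .hole
  | d + 1 => compA (appsCtx σ d) (.appA .hole (σ d))

theorem lfreeA_appsCtx {σ : ℕ → Exp S} (hσ : ∀ k, lfree (σ k)) (d : ℕ) :
    lfreeA (appsCtx σ d) := by
  induction d with
  | zero => trivial
  | succ d ih => exact lfreeA_compA ih ⟨trivial, hσ d⟩

theorem subst_lamN (τ : ℕ → Exp S) (d : ℕ) (e : Exp S) :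
    subst τ (lamN d e) = lamN d (subst (upN d τ) e) := by
  induction d generalizing τ with
  | zero => rw [upN_zero]; rfl
  | succ d ih => simp only [lamN, subst, ih, upN_upN, Nat.add_comm d 1]

theorem subst_pad_succ {σ : ℕ → Exp S} (hσ : ∀ k, closed (σ k)) (d : ℕ) (e : Exp S) :
    subst (pad σ d) (subst (upN d (consSub (σ d))) e) = subst (pad σ (d + 1)) e := by
  rw [subst_subst]
  congr 1
  funext k
  unfold upN pad
  rcases lt_trichotomy k d with h | rfl | h
  · simp [h, subst, show k < d + 1 by omega]
  · simp [consSub, rename_closed (hσ k), subst_closed (hσ k)]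
  · obtain ⟨j, rfl⟩ : ∃ j, k = d + 1 + j := ⟨k - (d + 1), by omega⟩
    simp [show ¬ d + 1 + j < d by omega, show d + 1 + j - d = j + 1 by omega, consSub,
      rename, subst]
    omega

theorem steps_appsCtx_lamN {σ : ℕ → Exp S} (hσ : ∀ k, closed (σ k)) (d : ℕ) (e : Exp S) :
    plugA (appsCtx σ d) (lamN d e) ⟶* subst (pad σ d) e := by
  induction d generalizing e with
  | zero =>
      have : pad σ 0 = .var := funext fun k => by simp [pad]
      rw [this, subst_var]
      exact .refl
  | succ d ih =>
      have hβ : lccStep (plugA (appsCtx σ (d + 1)) (lamN (d + 1) e))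
          (plugA (appsCtx σ d) (subst (consSub (σ d)) (lamN d e))) := by
        rw [appsCtx, plugA_compA]
        exact lccStep_plugA _ ⟨.hole, _, _, .nbeta, rfl, rfl⟩
      rw [← subst_pad_succ hσ]
      exact .head hβ (by rw [subst_lamN]; exact ih _)

theorem subst_shift_pad {σ : ℕ → Exp S} (hσ : ∀ k, closed (σ k)) (d : ℕ) (e : Exp S) :
    subst (fun j => σ (j + d)) (subst (pad σ d) e) = subst σ e := by
  rw [subst_subst]
  congr 1
  funext k
  unfold pad
  split_ifs with h
  · exact subst_closed (hσ k)
  · simp only [subst]; congr 1; omega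

theorem lfree_plugA {A : ACtx S} {e : Exp S} (hA : lfreeA A) (he : lfree e) :
    lfree (plugA A e) := by
  induction A with
  | hole => exact he
  | appA A t ih => exact ⟨ih hA.1, hA.2⟩
  | seqA A t ih => exact ⟨ih hA.1, hA.2⟩
  | caseA T A alts ih => exact ⟨ih hA.1, hA.2⟩

theorem closedUnder_ite_Omega {T : S.TyName} {c : S.CName T} {e : Exp S}
    (he : closedUnder (S.arity T c) e) (c' : S.CName T) :
    closedUnder (S.arity T c') (letI := S.deceq T; if c' = c then e else Omega) := by
  split_ifs with h
  · exact h ▸ he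
  · exact closedUnder_mono (Nat.zero_le _) Omega_closed

theorem lfree_ite_Omega {T : S.TyName} {c : S.CName T} {e : Exp S} (he : lfree e)
    (c' : S.CName T) : lfree (letI := S.deceq T; if c' = c then e else Omega) := by
  split_ifs
  exacts [he, Omega_lfree]

theorem trueE_closed : closed (trueE : Exp S) := fun i => (Fin.cast S.true_arity i).elim0

theorem exists_plugA_of_mem_Qlcc {f : Exp S → Exp S} (hf : f ∈ Qlcc S) :
    ∃ A, lfreeA A ∧ closedA A ∧ ∀ e, f e = plugA A e := by
  rcases hf with ⟨r, hl, hc, rfl⟩ | ⟨T, c, i, rfl⟩ | ⟨T, c, rfl⟩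
  · exact ⟨.appA .hole r, ⟨trivial, hl⟩, ⟨trivial, hc⟩, fun _ => rfl⟩
  · exact ⟨.caseA T .hole _, ⟨trivial, lfree_ite_Omega (e := .var i) trivial⟩,
      ⟨trivial, closedUnder_ite_Omega (e := .var i) i.isLt⟩, fun _ => rfl⟩
  · exact ⟨.caseA T .hole _, ⟨trivial, lfree_ite_Omega (e := trueE) fun _ => trivial⟩,
      ⟨trivial, closedUnder_ite_Omega (closedUnder_mono (Nat.zero_le _) trueE_closed)⟩,
      fun _ => rfl⟩

theorem steps_of_mem_Qlcc {f : Exp S → Exp S} (hf : f ∈ Qlcc S) {a b : Exp S} (h : a ⟶* b) :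
    f a ⟶* f b := by
  obtain ⟨A, -, -, hA⟩ := exists_plugA_of_mem_Qlcc hf
  simpa only [hA] using steps_plugA A h

theorem exists_plugA_of_forall_mem_Qlcc {l : List (Exp S → Exp S)}
    (hl : ∀ f ∈ l, f ∈ Qlcc S) :
    ∃ A, lfreeA A ∧ closedA A ∧ ∀ e, applyAll l e = plugA A e := by
  induction l with
  | nil => exact ⟨.hole, trivial, trivial, fun _ => rfl⟩
  | cons f l ih =>
      obtain ⟨A, hAl, hAc, hA⟩ := exists_plugA_of_mem_Qlcc (hl f List.mem_cons_self)
      obtain ⟨B, hBl, hBc, hB⟩ := ih fun g hg => hl g (List.mem_cons_of_mem f hg)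
      refine ⟨compA A B, lfreeA_compA hAl hBl, closedA_compA hAc hBc, fun e => ?_⟩
      simp only [applyAll, List.foldr_cons] at hB ⊢
      rw [hA, hB, plugA_compA]

theorem leLcc.leQlcc_subst {s t : Exp S} (h : leLcc s t) (hs : lfree s) {σ : ℕ → Exp S}
    (hσc : ∀ k, closed (σ k)) (hσl : ∀ k, lfree (σ k)) :
    leQlcc (Qlcc S) (subst σ s) (subst σ t) := by
  intro l hl hconv
  obtain ⟨A, hAl, hAc, hA⟩ := exists_plugA_of_forall_mem_Qlcc hl
  have hsubst (τ : ℕ → Exp S) (e : Exp S) : subst τ (plugA A e) = plugA A (subst τ e) := by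
    rw [subst_plugA, substA_of_closedA hAc]
  rw [hA, ← hsubst] at hconv ⊢
  obtain ⟨v, hsteps, hv⟩ := hconv
  obtain ⟨n, hn⟩ := exists_stepN hsteps
  obtain ⟨d, hd⟩ := exists_lccConv_subst_pad hσc hσl hv n _ (lfree_plugA hAl hs) hn
  -- the test `A` around `(λ x_{d-1} … x_0. [·]) (σ (d-1)) … (σ 0)`
  let C := wrapA (compA A (appsCtx σ d)) (lamCtx d)
  have hC (e : Exp S) : plugC C e ⟶* plugA A (subst (pad σ d) e) := by
    rw [plugC_wrapA, plugC_lamCtx, plugA_compA]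
    exact steps_plugA A (steps_appsCtx_lamN hσc d e)
  have hCs : lccConv (plugC C s) := (lccConv_iff_of_steps (hC s)).mpr (hsubst _ s ▸ hd d le_rfl)
  have hCt := h C (lfreeCtx_wrapA (lfreeA_compA hAl (lfreeA_appsCtx hσl d)) (lfreeCtx_lamCtx d)) hCs
  have := ((lccConv_iff_of_steps (hC t)).mp hCt).subst (fun j => σ (j + d))
  rwa [hsubst, subst_shift_pad hσc, ← hsubst] at this

theorem leQlcc.lccConv {𝒬 : Set (Exp S → Exp S)} {a b : Exp S} (h : leQlcc 𝒬 a b)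
    (ha : lccConv a) : lccConv b :=
  h [] (fun _ hf => absurd hf List.not_mem_nil) ha

theorem leQlcc.comp {𝒬 : Set (Exp S → Exp S)} {a b : Exp S} (h : leQlcc 𝒬 a b)
    {f : Exp S → Exp S} (hf : f ∈ 𝒬) : leQlcc 𝒬 (f a) (f b) := by
  intro l hl hconv
  have happ (x : Exp S) : applyAll (l ++ [f]) x = applyAll l (f x) := by
    simp [applyAll, List.foldr_append]
  rw [← happ] at hconv ⊢
  refine h _ (fun g hg => ?_) hconv
  rcases List.mem_append.mp hg with hg | hg
  exacts [hl g hg, List.mem_singleton.mp hg ▸ hf]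

theorem leQlcc.of_steps {a b a' b' : Exp S} (h : leQlcc (Qlcc S) a b) (ha : a ⟶* a')
    (hb : b ⟶* b') : leQlcc (Qlcc S) a' b' := by
  intro l hl hconv
  obtain ⟨A, -, -, hA⟩ := exists_plugA_of_forall_mem_Qlcc hl
  rw [hA] at hconv ⊢
  rw [← lccConv_iff_of_steps (steps_plugA A hb)]
  exact hA b ▸ h l hl (hA a ▸ (lccConv_iff_of_steps (steps_plugA A ha)).mpr hconv)

theorem steps_app_of_steps_lam {a u : Exp S} (h : a ⟶* .lam u) (r : Exp S) :
    .app a r ⟶* subst (consSub r) u :=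
  (steps_plugA (.appA .hole r) h).tail ⟨.hole, _, _, .nbeta, rfl, rfl⟩

theorem subst_eq_subst_consSub {u : Exp S} (hu : closedUnder 1 u) (σ : ℕ → Exp S) :
    subst σ u = subst (consSub (σ 0)) u :=
  subst_congr hu fun k hk => by obtain rfl : k = 0 := (by omega); rfl

theorem caseSelCtx_constr_lccStep {T : S.TyName} {c : S.CName T} (i : Fin (S.arity T c))
    (args : Fin (S.arity T c) → Exp S) :
    lccStep (caseSelCtx T c i (.constr T c args)) (args i) := by
  refine ⟨.hole, _, _, .ncase, rfl, ?_⟩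
  simp [plugA, subst, instSub_lt _ i.isLt]

theorem lccConv_caseTrueCtx_constr {T : S.TyName} (c : S.CName T)
    (args : Fin (S.arity T c) → Exp S) : lccConv (caseTrueCtx T c (.constr T c args)) := by
  refine (lccConv_iff_of_steps (.single ⟨.hole, _, _, .ncase, rfl, rfl⟩)).mpr ?_
  simp only [plugA, if_pos]
  exact lccConv_of_isValue trivial

theorem exists_eq_constr_of_lccConv_caseTrueCtx {T : S.TyName} {c : S.CName T} {w : Exp S}
    (hw : isValue w) (h : lccConv (caseTrueCtx T c w)) : ∃ args, w = .constr T c args := by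
  by_contra hne
  rcases isValue_iff.mp hw with ⟨u, rfl⟩ | ⟨T', c', args, rfl⟩
  · have hst : Stuck (caseTrueCtx T c (.lam u)) :=
      Or.inr ⟨T, _, _, rfl, hw, fun _ _ heq => nomatch heq⟩
    exact hst.not_lccConv (A := .hole) h
  by_cases hT : T' = T
  · subst hT
    have hc : c' ≠ c := by rintro rfl; exact hne ⟨args, rfl⟩
    have hstep : lccStep (caseTrueCtx T' c (.constr T' c' args)) Omega := by
      refine ⟨.hole, _, _, .ncase, rfl, ?_⟩
      simp [plugA, hc, subst_closed Omega_closed]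
    exact not_lccConv_of_lccStep_self lccStep_Omega ((lccConv_iff_of_steps (.single hstep)).mp h)
  · have hst : Stuck (caseTrueCtx T c (.constr T' c' args)) :=
      Or.inr ⟨T, _, _, rfl, hw, fun c₀ args₀ heq => hT (Exp.constr.inj heq).1⟩
    exact hst.not_lccConv (A := .hole) h

def leQlccClosed (a b : Exp S) : Prop := closed a ∧ closed b ∧ leQlcc (Qlcc S) a b

theorem leQlccClosed.Flcc_lam {a b u : Exp S} (h : leQlccClosed a b)
    (hu : lccConvTo a (.lam u)) :
    (∃ u', lccConvTo b (.lam u') ∧ openL leQlccClosed u u') ∨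
      ∃ T c targs, lccConvTo b (.constr T c targs) ∧ cBot u := by
  obtain ⟨ha, hb, hab⟩ := h
  obtain ⟨w, hbw, hw⟩ := hab.lccConv ⟨_, hu⟩
  have hu1 : closedUnder 1 u := closed_of_steps hu.1 ha
  have happ {r : Exp S} (hrl : lfree r) (hrc : closed r) :
      leQlcc (Qlcc S) (subst (consSub r) u) (.app b r) :=
    (hab.comp (Or.inl ⟨r, hrl, hrc, rfl⟩)).of_steps (steps_app_of_steps_lam hu.1 r) .refl
  rcases isValue_iff.mp hw with ⟨u', rfl⟩ | ⟨T, c, targs, rfl⟩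
  · refine Or.inl ⟨u', ⟨hbw, hw⟩, openL_of_closed fun σ hσc hσl => ?_⟩
    refine ⟨closed_subst hσc u, closed_subst hσc u', ?_⟩
    rw [subst_eq_subst_consSub hu1, subst_eq_subst_consSub (closed_of_steps hbw hb)]
    exact (happ (hσl 0) (hσc 0)).of_steps .refl (steps_app_of_steps_lam hbw _)
  · refine Or.inr ⟨T, c, targs, ⟨hbw, hw⟩, cBot_of_closed fun σ hσc hσl hconv => ?_⟩
    rw [subst_eq_subst_consSub hu1] at hconv
    have hstuck : Stuck (Exp.app (.constr T c targs) (σ 0)) := Or.inl ⟨T, c, targs, _, rfl⟩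
    exact hstuck.not_lccConv (A := .hole)
      ((lccConv_iff_of_steps (steps_plugA (.appA .hole (σ 0)) hbw)).mp
        ((happ (hσl 0) (hσc 0)).lccConv hconv))

theorem leQlccClosed.Flcc_constr {a b : Exp S} (h : leQlccClosed a b) {T : S.TyName}
    {c : S.CName T} {args : Fin (S.arity T c) → Exp S} (ha : lccConvTo a (.constr T c args)) :
    ∃ targs, lccConvTo b (.constr T c targs) ∧ ∀ i, leQlccClosed (args i) (targs i) := by
  obtain ⟨hac, hbc, hab⟩ := h
  have htest : caseTrueCtx T c ∈ Qlcc S := Or.inr (Or.inr ⟨T, c, rfl⟩)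
  have htrue : lccConv (caseTrueCtx T c b) :=
    (hab.comp htest).lccConv ((lccConv_iff_of_steps (steps_of_mem_Qlcc htest ha.1)).mpr
      (lccConv_caseTrueCtx_constr c args))
  obtain ⟨w, hbw, hw⟩ := hab.lccConv ⟨_, ha⟩
  obtain ⟨targs, rfl⟩ := exists_eq_constr_of_lccConv_caseTrueCtx hw
    ((lccConv_iff_of_steps (steps_of_mem_Qlcc htest hbw)).mp htrue)
  refine ⟨targs, ⟨hbw, hw⟩, fun i => ⟨closed_of_steps ha.1 hac i, closed_of_steps hbw hbc i, ?_⟩⟩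
  have hsel : caseSelCtx T c i ∈ Qlcc S := Or.inr (Or.inl ⟨T, c, i, rfl⟩)
  exact (hab.comp hsel).of_steps
    ((steps_of_mem_Qlcc hsel ha.1).tail (caseSelCtx_constr_lccStep i args))
    ((steps_of_mem_Qlcc hsel hbw).tail (caseSelCtx_constr_lccStep i targs))

theorem leQlccClosed.Flcc {a b : Exp S} (h : leQlccClosed a b) : Flcc leQlccClosed a b :=
  ⟨fun _ hu => h.Flcc_lam hu, fun _ _ _ ha => h.Flcc_constr ha⟩

theorem openL_simLcc_of_leLcc {s t : Exp S} (hs : lfree s) (h : leLcc s t) :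
    openL simLcc s t :=
  openL_of_closed fun _ hσc hσl =>
    gfpRel_coinduct (fun _ _ hab => leQlccClosed.Flcc hab)
      ⟨closed_subst hσc s, closed_subst hσc t, h.leQlcc_subst hs hσc hσl⟩

/-! ### Soundness: Howe's method -/

/-- Howe's closure of open similarity: `op(aᵢ) ≼ᴴ b` if `aᵢ ≼ᴴ aᵢ'` and `op(aᵢ') ≼ᵒ b`. -/
inductive Howe : Exp S → Exp S → Prop
  | var {k : ℕ} {t : Exp S} : openL simLcc (.var k) t → lfree t → Howe (.var k) t
  | app {a a' b b' t : Exp S} : Howe a a' → Howe b b' →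
      openL simLcc (.app a' b') t → lfree t → Howe (.app a b) t
  | lam {a a' t : Exp S} : Howe a a' → openL simLcc (.lam a') t → lfree t → Howe (.lam a) t
  | constr {T : S.TyName} {c : S.CName T} {args args' : Fin (S.arity T c) → Exp S}
      {t : Exp S} :
      (∀ i, Howe (args i) (args' i)) → openL simLcc (.constr T c args') t → lfree t →
      Howe (.constr T c args) t
  | seqE {a a' b b' t : Exp S} : Howe a a' → Howe b b' →
      openL simLcc (.seqE a' b') t → lfree t → Howe (.seqE a b) t
  | caseE {T : S.TyName} {e e' : Exp S} {alts alts' : (c : S.CName T) → Exp S} {t : Exp S} :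
      Howe e e' → (∀ c, Howe (alts c) (alts' c)) →
      openL simLcc (.caseE T e' alts') t → lfree t → Howe (.caseE T e alts) t

namespace Howe

theorem lfree_right {a b : Exp S} (h : Howe a b) : lfree b := by
  cases h <;> assumption

theorem lfree_left {a b : Exp S} (h : Howe a b) : lfree a := by
  induction h with
  | var => trivial
  | app _ _ _ _ ih1 ih2 => exact ⟨ih1, ih2⟩
  | lam _ _ _ ih => exact ih
  | constr _ _ _ ih => exact ih
  | seqE _ _ _ _ ih1 ih2 => exact ⟨ih1, ih2⟩
  | caseE _ _ _ _ ihe ihalts => exact ⟨ihe, ihalts⟩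

theorem refl {a : Exp S} (ha : lfree a) : Howe a a := by
  induction a with
  | var k => exact .var (openL_simLcc_refl _) trivial
  | app u v ihu ihv => exact .app (ihu ha.1) (ihv ha.2) (openL_simLcc_refl _) ha
  | lam u ih => exact .lam (ih ha) (openL_simLcc_refl _) ha
  | constr T c args ih => exact .constr (fun i => ih i (ha i)) (openL_simLcc_refl _) ha
  | seqE u v ihu ihv => exact .seqE (ihu ha.1) (ihv ha.2) (openL_simLcc_refl _) ha
  | caseE T e alts ihe ihalts =>
      exact .caseE (ihe ha.1) (fun c => ihalts c (ha.2 c)) (openL_simLcc_refl _) ha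
  | letrecE => exact ha.elim

theorem trans_openL {a b c : Exp S} (h : Howe a b) (hbc : openL simLcc b c) (hc : lfree c) :
    Howe a c := by
  cases h with
  | var hs _ => exact .var (openL_simLcc_trans hs hbc) hc
  | app h1 h2 hs _ => exact .app h1 h2 (openL_simLcc_trans hs hbc) hc
  | lam h1 hs _ => exact .lam h1 (openL_simLcc_trans hs hbc) hc
  | constr h1 hs _ => exact .constr h1 (openL_simLcc_trans hs hbc) hc
  | seqE h1 h2 hs _ => exact .seqE h1 h2 (openL_simLcc_trans hs hbc) hc
  | caseE h1 h2 hs _ => exact .caseE h1 h2 (openL_simLcc_trans hs hbc) hc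

theorem of_openL {a b : Exp S} (ha : lfree a) (h : openL simLcc a b) (hb : lfree b) :
    Howe a b :=
  (refl ha).trans_openL h hb

theorem rename {a b : Exp S} (h : Howe a b) (f : ℕ → ℕ) :
    Howe (Core.rename f a) (Core.rename f b) := by
  induction h generalizing f with
  | var hs hl => exact .var (hs.rename f) (lfree_rename hl f)
  | app _ _ hs hl ih1 ih2 => exact .app (ih1 f) (ih2 f) (hs.rename f) (lfree_rename hl f)
  | lam _ hs hl ih => exact .lam (ih _) (hs.rename f) (lfree_rename hl f)
  | constr _ hs hl ih => exact .constr (fun i => ih i f) (hs.rename f) (lfree_rename hl f)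
  | seqE _ _ hs hl ih1 ih2 => exact .seqE (ih1 f) (ih2 f) (hs.rename f) (lfree_rename hl f)
  | caseE _ _ hs hl ihe ihalts =>
      exact .caseE (ihe f) (fun c => ihalts c _) (hs.rename f) (lfree_rename hl f)

theorem upN {σ τ : ℕ → Exp S} (h : ∀ k, Howe (σ k) (τ k)) (m : ℕ) (k : ℕ) :
    Howe (Core.upN m σ k) (Core.upN m τ k) := by
  unfold Core.upN
  split_ifs
  · exact refl trivial
  · exact (h _).rename _

theorem subst {a b : Exp S} (h : Howe a b) {σ τ : ℕ → Exp S} (hστ : ∀ k, Howe (σ k) (τ k)) :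
    Howe (Core.subst σ a) (Core.subst τ b) := by
  have hτ (k : ℕ) : lfree (τ k) := (hστ k).lfree_right
  induction h generalizing σ τ with
  | var hs hl => exact (hστ _).trans_openL (hs.subst hτ) (lfree_subst hl hτ)
  | app _ _ hs hl ih1 ih2 =>
      exact .app (ih1 hστ hτ) (ih2 hστ hτ) (hs.subst hτ) (lfree_subst hl hτ)
  | lam _ hs hl ih =>
      exact .lam (ih (upN hστ 1) (fun k => (upN hστ 1 k).lfree_right)) (hs.subst hτ)
        (lfree_subst hl hτ)
  | constr _ hs hl ih =>
      exact .constr (fun i => ih i hστ hτ) (hs.subst hτ) (lfree_subst hl hτ)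
  | seqE _ _ hs hl ih1 ih2 =>
      exact .seqE (ih1 hστ hτ) (ih2 hστ hτ) (hs.subst hτ) (lfree_subst hl hτ)
  | caseE _ _ hs hl ihe ihalts =>
      exact .caseE (ihe hστ hτ)
        (fun c => ihalts c (upN hστ _) (fun k => (upN hστ _ k).lfree_right))
        (hs.subst hτ) (lfree_subst hl hτ)

end Howe

theorem lfree_plugC {C : Ctx S} (hC : lfreeCtx C) {e : Exp S} (he : lfree e) :
    lfree (plugC C e) := by
  induction C with
  | hole => exact he
  | appL C t ih => exact ⟨ih hC.1, hC.2⟩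
  | appR t C ih => exact ⟨hC.1, ih hC.2⟩
  | lamC C ih => exact ih hC
  | seqL C t ih => exact ⟨ih hC.1, hC.2⟩
  | seqR t C ih => exact ⟨hC.1, ih hC.2⟩
  | constrC T c i args C ih =>
      intro j
      show lfree (Function.update args i (plugC C e) j)
      rcases eq_or_ne j i with rfl | hj
      · rw [Function.update_self]; exact ih hC.2
      · rw [Function.update_of_ne hj]; exact hC.1 j
  | caseScrut T C alts ih => exact ⟨ih hC.1, hC.2⟩
  | caseAlt T c0 scrut alts C ih =>
      refine ⟨hC.1, fun c => ?_⟩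
      show lfree (updAlt alts c0 (plugC C e) c)
      unfold updAlt
      split_ifs
      exacts [ih hC.2.2, hC.2.1 c]
  | letrecB => exact hC.elim
  | letrecT => exact hC.elim

theorem Howe.plugC {C : Ctx S} (hC : lfreeCtx C) {s t : Exp S} (h : Howe s t) :
    Howe (Core.plugC C s) (Core.plugC C t) := by
  have ht := h.lfree_right
  have hrefl (e : Exp S) : openL simLcc e e := openL_simLcc_refl e
  induction C with
  | hole => exact h
  | appL C r ih => exact .app (ih hC.1) (.refl hC.2) (hrefl _) (lfree_plugC hC ht)
  | appR r C ih => exact .app (.refl hC.1) (ih hC.2) (hrefl _) (lfree_plugC hC ht)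
  | lamC C ih => exact .lam (ih hC) (hrefl _) (lfree_plugC hC ht)
  | seqL C r ih => exact .seqE (ih hC.1) (.refl hC.2) (hrefl _) (lfree_plugC hC ht)
  | seqR r C ih => exact .seqE (.refl hC.1) (ih hC.2) (hrefl _) (lfree_plugC hC ht)
  | constrC T c i args C ih =>
      refine .constr (fun j => ?_) (hrefl _) (lfree_plugC hC ht)
      show Howe (Function.update args i _ j) (Function.update args i _ j)
      rcases eq_or_ne j i with rfl | hj
      · simp only [Function.update_self]; exact ih hC.2
      · simp only [Function.update_of_ne hj]; exact .refl (hC.1 j)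
  | caseScrut T C alts ih =>
      exact .caseE (ih hC.1) (fun c => .refl (hC.2 c)) (hrefl _) (lfree_plugC hC ht)
  | caseAlt T c0 scrut alts C ih =>
      refine .caseE (.refl hC.1) (fun c => ?_) (hrefl _) (lfree_plugC hC ht)
      show Howe (updAlt alts c0 _ c) (updAlt alts c0 _ c)
      unfold updAlt
      split_ifs
      exacts [ih hC.2.2, .refl (hC.2.1 c)]
  | letrecB => exact hC.elim
  | letrecT => exact hC.elim

inductive Compat (R : Exp S → Exp S → Prop) : Exp S → Exp S → Prop
  | var (k : ℕ) : Compat R (.var k) (.var k)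
  | app {a a' b b' : Exp S} : R a a' → R b b' → Compat R (.app a b) (.app a' b')
  | lam {u u' : Exp S} : R u u' → Compat R (.lam u) (.lam u')
  | constr {T : S.TyName} {c : S.CName T} {args args' : Fin (S.arity T c) → Exp S} :
      (∀ i, R (args i) (args' i)) → Compat R (.constr T c args) (.constr T c args')
  | seqE {a a' b b' : Exp S} : R a a' → R b b' → Compat R (.seqE a b) (.seqE a' b')
  | caseE {T : S.TyName} {e e' : Exp S} {alts alts' : (c : S.CName T) → Exp S} :
      R e e' → (∀ c, R (alts c) (alts' c)) → Compat R (.caseE T e alts) (.caseE T e' alts')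

theorem Howe.exists_compat {a b : Exp S} (h : Howe a b) :
    ∃ c, Compat Howe a c ∧ openL simLcc c b := by
  cases h with
  | var hs => exact ⟨_, .var _, hs⟩
  | app h1 h2 hs => exact ⟨_, .app h1 h2, hs⟩
  | lam h1 hs => exact ⟨_, .lam h1, hs⟩
  | constr h1 hs => exact ⟨_, .constr h1, hs⟩
  | seqE h1 h2 hs => exact ⟨_, .seqE h1 h2, hs⟩
  | caseE h1 h2 hs => exact ⟨_, .caseE h1 h2, hs⟩

theorem Howe.subst_right {a b : Exp S} (h : Howe a b) {m : ℕ} (ha : closedUnder m a)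
    {σ : ℕ → Exp S} (hσ : ∀ k, lfree (σ k)) : Howe a (Core.subst (Core.upN m σ) b) := by
  have := h.subst (Howe.upN (fun k => Howe.refl (hσ k)) m)
  rwa [subst_eq_self (σ := Core.upN m σ) ha fun k hk => if_pos hk] at this

theorem Compat.subst_right {a c : Exp S} (h : Compat Howe a c) (ha : closed a)
    {σ : ℕ → Exp S} (hσ : ∀ k, lfree (σ k)) : Compat Howe a (subst σ c) := by
  have h0 {x y : Exp S} (hxy : Howe x y) (hx : closed x) : Howe x (subst σ y) := by
    simpa only [upN_zero] using hxy.subst_right hx hσ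
  cases h with
  | var k => exact absurd ha (Nat.not_lt_zero k)
  | app h1 h2 => exact .app (h0 h1 ha.1) (h0 h2 ha.2)
  | lam h1 => exact .lam (h1.subst_right ha hσ)
  | constr h1 => exact .constr fun i => h0 (h1 i) (ha i)
  | seqE h1 h2 => exact .seqE (h0 h1 ha.1) (h0 h2 ha.2)
  | caseE h1 h2 =>
      exact .caseE (h0 h1 ha.1) fun c => (h2 c).subst_right (by simpa using ha.2 c) hσ

/-- As in clause (i) of `F_lcc`, an abstraction may be matched by a constructor application,
provided the body it is matched with lies in `cBot`. -/
def ValRel : Exp S → Exp S → Prop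
  | .lam u, w => ∃ u', closedUnder 1 u' ∧ Howe u u' ∧ (w = .lam u' ∨ isConstrApp w ∧ cBot u')
  | .constr T c args, w => ∃ targs, w = .constr T c targs ∧ ∀ i, Howe (args i) (targs i)
  | _, _ => False

theorem ValRel.of_simLcc {v w b c : Exp S} (hv : ValRel v w) (hcw : lccConvTo c w)
    (hcb : simLcc c b) (hc : closed c) (hb : closed b) (hbl : lfree b) :
    ∃ w', lccConvTo b w' ∧ ValRel v w' := by
  match v, hv with
  | .lam u, ⟨u', hu'1, hH, hw⟩ =>
      rcases hw with rfl | ⟨⟨T, c, targs, rfl⟩, hbot⟩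
      · rcases hcb.unfold.1 u' hcw with ⟨u'', hbu, hopen⟩ | ⟨T, c, targs, hbu, hbot⟩
        · have hu'' : lfree (Exp.lam u'') := lfree_of_steps hbu.1 hbl
          exact ⟨_, hbu, u'', closed_of_steps hbu.1 hb, hH.trans_openL hopen hu'', Or.inl rfl⟩
        · exact ⟨_, hbu, u', hu'1, hH, Or.inr ⟨⟨T, c, targs, rfl⟩, hbot⟩⟩
      · obtain ⟨targs', hbu, -⟩ := hcb.unfold.2 T c targs hcw
        exact ⟨_, hbu, u', hu'1, hH, Or.inr ⟨⟨T, c, targs', rfl⟩, hbot⟩⟩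
  | .constr T c args, ⟨targs, hw, hH⟩ =>
      subst hw
      obtain ⟨targs', hbu, hsim⟩ := hcb.unfold.2 T c targs hcw
      refine ⟨_, hbu, targs', rfl, fun i => (hH i).trans_openL ?_ (lfree_of_steps hbu.1 hbl i)⟩
      exact openL_of_closed_of_rel (closed_of_steps hcw.1 hc i) (closed_of_steps hbu.1 hb i)
        (hsim i)

theorem Howe.consSub {a b : Exp S} (h : Howe a b) (k : ℕ) :
    Howe (Core.consSub a k) (Core.consSub b k) := by
  cases k
  exacts [h, .refl trivial]

theorem Howe.instSub {m : ℕ} {args targs : Fin m → Exp S} (h : ∀ i, Howe (args i) (targs i))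
    (k : ℕ) : Howe (Core.instSub args k) (Core.instSub targs k) := by
  unfold Core.instSub
  split_ifs
  exacts [h _, .refl trivial]

theorem closed_subst_consSub {u r : Exp S} (hu : closedUnder 1 u) (hr : closed r) :
    closed (subst (consSub r) u) :=
  closedUnder_subst hu fun k hk => by obtain rfl : k = 0 := (by omega); exact hr

theorem closed_subst_instSub {m : ℕ} {e : Exp S} {args : Fin m → Exp S}
    (he : closedUnder m e) (hargs : ∀ i, closed (args i)) : closed (subst (instSub args) e) :=
  closedUnder_subst he fun _ hk => instSub_lt args hk ▸ hargs _

theorem lfree_consSub {r : Exp S} (hr : lfree r) (k : ℕ) : lfree (consSub r k) := by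
  cases k
  exacts [hr, trivial]

variable (S) in
/-- the key lemma of Howe's method, for evaluations of length `n` -/
def HoweSimulates (n : ℕ) : Prop :=
  ∀ ⦃a b v : Exp S⦄, StepN n a v → isValue v → closed a → closed b → Howe a b →
    ∃ w, lccConvTo b w ∧ ValRel v w

theorem Compat.lccConvTo_app {n : ℕ} (ih : ∀ m < n, HoweSimulates S m) {a₁ a₂ b₁ b₂ v : Exp S}
    (h₁ : Howe a₁ b₁) (h₂ : Howe a₂ b₂) (ha : closed (.app a₁ a₂)) (hb : closed (.app b₁ b₂))
    (hn : StepN n (.app a₁ a₂) v) (hv : isValue v) :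
    ∃ w, lccConvTo (.app b₁ b₂) w ∧ ValRel v w := by
  obtain ⟨k, m, w₁, rfl, hk, hw₁, hm⟩ :=
    exists_stepN_of_plugA hv n (.appA .hole a₂) a₁ hn h₁.lfree_left
  rcases isValue_iff.mp hw₁ with ⟨u, rfl⟩ | ⟨T, c, args, rfl⟩
  · obtain ⟨m, rfl, hm'⟩ := hm.of_lccStep hv ⟨.hole, _, _, .nbeta, rfl, rfl⟩
    obtain ⟨w₁', hw₁', u', hu', hHu, hform⟩ := ih k (by omega) hk hw₁ ha.1 hb.1 h₁
    have hcl' := closed_subst_consSub hu' hb.2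
    obtain ⟨w, hw, hvw⟩ := ih m (by omega) hm' hv
      (closed_subst_consSub (closed_of_steps hk.steps ha.1) ha.2) hcl' (hHu.subst (h₂.consSub))
    rcases hform with rfl | ⟨-, hbot⟩
    · exact ⟨w, ⟨(steps_app_of_steps_lam hw₁'.1 b₂).trans hw.1, hw.2⟩, hvw⟩
    · exact absurd ⟨w, hw⟩ (hbot _ (lfree_consSub h₂.lfree_right) hcl')
  · have hst : Stuck (Exp.app (.constr T c args) a₂) := Or.inl ⟨T, c, args, a₂, rfl⟩
    exact absurd ⟨v, hm.steps, hv⟩ (hst.not_lccConv (A := .hole))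

theorem Compat.lccConvTo_seqE {n : ℕ} (ih : ∀ m < n, HoweSimulates S m)
    {a₁ a₂ b₁ b₂ v : Exp S} (h₁ : Howe a₁ b₁) (h₂ : Howe a₂ b₂) (ha : closed (.seqE a₁ a₂))
    (hb : closed (.seqE b₁ b₂)) (hn : StepN n (.seqE a₁ a₂) v) (hv : isValue v) :
    ∃ w, lccConvTo (.seqE b₁ b₂) w ∧ ValRel v w := by
  obtain ⟨k, m, w₁, rfl, hk, hw₁, hm⟩ :=
    exists_stepN_of_plugA hv n (.seqA .hole a₂) a₁ hn h₁.lfree_left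
  obtain ⟨m, rfl, hm'⟩ := hm.of_lccStep hv ⟨.hole, _, _, .nseq hw₁, rfl, rfl⟩
  obtain ⟨w₁', hw₁', -⟩ := ih k (by omega) hk hw₁ ha.1 hb.1 h₁
  obtain ⟨w, hw, hvw⟩ := ih m (by omega) hm' hv ha.2 hb.2 h₂
  refine ⟨w, ⟨(steps_plugA (.seqA .hole b₂) hw₁'.1).trans (.head ?_ hw.1), hw.2⟩, hvw⟩
  exact ⟨.hole, _, _, .nseq hw₁'.2, rfl, rfl⟩

theorem Compat.lccConvTo_caseE {n : ℕ} (ih : ∀ m < n, HoweSimulates S m) {T : S.TyName}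
    {a b v : Exp S} {alts alts' : (c : S.CName T) → Exp S} (h₁ : Howe a b)
    (h₂ : ∀ c, Howe (alts c) (alts' c)) (ha : closed (.caseE T a alts))
    (hb : closed (.caseE T b alts')) (hn : StepN n (.caseE T a alts) v) (hv : isValue v) :
    ∃ w, lccConvTo (.caseE T b alts') w ∧ ValRel v w := by
  obtain ⟨k, m, w₁, rfl, hk, hw₁, hm⟩ :=
    exists_stepN_of_plugA hv n (.caseA T .hole alts) a hn h₁.lfree_left
  obtain ⟨c, args, rfl⟩ : ∃ c args, w₁ = .constr T c args := by
    by_contra hne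
    have hst : Stuck (Exp.caseE T w₁ alts) :=
      Or.inr ⟨T, w₁, alts, rfl, hw₁, fun c args h => hne ⟨c, args, h⟩⟩
    exact hst.not_lccConv (A := .hole) ⟨v, hm.steps, hv⟩
  obtain ⟨m, rfl, hm'⟩ := hm.of_lccStep hv ⟨.hole, _, _, .ncase, rfl, rfl⟩
  obtain ⟨w₁', hw₁', targs, rfl, hargs⟩ := ih k (by omega) hk hw₁ ha.1 hb.1 h₁
  have hca : closedUnder (S.arity T c) (alts c) := by simpa using ha.2 c
  have hcb : closedUnder (S.arity T c) (alts' c) := by simpa using hb.2 c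
  obtain ⟨w, hw, hvw⟩ := ih m (by omega) hm' hv
    (closed_subst_instSub hca (closed_of_steps hk.steps ha.1))
    (closed_subst_instSub hcb (closed_of_steps hw₁'.1 hb.1)) ((h₂ c).subst (Howe.instSub hargs))
  refine ⟨w, ⟨(steps_plugA (.caseA T .hole alts') hw₁'.1).trans (.head ?_ hw.1), hw.2⟩, hvw⟩
  exact ⟨.hole, _, _, .ncase, rfl, rfl⟩

theorem Compat.lccConvTo {n : ℕ} (ih : ∀ m < n, HoweSimulates S m) {a c v : Exp S}
    (h : Compat Howe a c) (ha : closed a) (hc : closed c) (hn : StepN n a v) (hv : isValue v) :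
    ∃ w, lccConvTo c w ∧ ValRel v w := by
  cases h with
  | var k => exact absurd ha (Nat.not_lt_zero k)
  | lam h₁ =>
      obtain ⟨-, rfl⟩ := hn.eq_of_isValue trivial
      exact ⟨_, ⟨.refl, trivial⟩, _, hc, h₁, Or.inl rfl⟩
  | constr h₁ =>
      obtain ⟨-, rfl⟩ := hn.eq_of_isValue trivial
      exact ⟨_, ⟨.refl, trivial⟩, _, rfl, h₁⟩
  | app h₁ h₂ => exact lccConvTo_app ih h₁ h₂ ha hc hn hv
  | seqE h₁ h₂ => exact lccConvTo_seqE ih h₁ h₂ ha hc hn hv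
  | caseE h₁ h₂ => exact lccConvTo_caseE ih h₁ h₂ ha hc hn hv

theorem howeSimulates (n : ℕ) : HoweSimulates S n := by
  induction n using Nat.strong_induction_on with
  | _ n ih =>
  intro a b v hn hv ha hb h
  obtain ⟨c, hac, hcb⟩ := h.exists_compat
  -- `c` may be open; its `Ω`-instance is closed and still similar to `b`
  have hΩ : ∀ _ : ℕ, lfree (Omega : Exp S) := fun _ => Omega_lfree
  have hc : closed (subst (fun _ => Omega) c) := closed_subst (fun _ => Omega_closed) c
  obtain ⟨w, hcw, hvw⟩ := (hac.subst_right ha hΩ).lccConvTo ih ha hc hn hv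
  have hsim := hcb _ hΩ hc (by rwa [subst_closed hb])
  rw [subst_closed hb] at hsim
  exact hvw.of_simLcc hcw hsim hc hb h.lfree_right

theorem leLcc_of_openL_simLcc {s t : Exp S} (hs : lfree s) (ht : lfree t)
    (h : openL simLcc s t) : leLcc s t := by
  intro C hC hconv
  have hΩ : ∀ _ : ℕ, Howe (Omega : Exp S) Omega := fun _ => .refl Omega_lfree
  have hH := ((Howe.of_openL hs h ht).plugC hC).subst hΩ
  obtain ⟨v, hsteps, hv⟩ := hconv.subst (fun _ => Omega)
  obtain ⟨n, hn⟩ := exists_stepN hsteps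
  obtain ⟨w, hw, -⟩ := howeSimulates n hn hv (closed_subst (fun _ => Omega_closed) _)
    (closed_subst (fun _ => Omega_closed) _) hH
  exact lccConv_of_lccConv_subst_Omega (lfree_plugC hC ht) ⟨w, hw⟩

end Core

namespace Core

/-- In `L_lcc`, the open extension of applicative similarity coincides
with the contextual preorder, and consequently applicative bisimilarity coincides with
contextual equivalence. -/
theorem lcc_similarity_eq_contextual_preorder (S : Sig) :
    (∀ s t : Exp S, lfree s → lfree t → (openL simLcc s t ↔ leLcc s t)) ∧
    (∀ s t : Exp S, lfree s → lfree t →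
      ((openL simLcc s t ∧ openL simLcc t s) ↔ eqLcc s t)) := by
  have key (s t : Exp S) (hs : lfree s) (ht : lfree t) : openL simLcc s t ↔ leLcc s t :=
    ⟨leLcc_of_openL_simLcc hs ht, openL_simLcc_of_leLcc hs⟩
  exact ⟨key, fun s t hs ht => and_congr (key s t hs ht) (key t s ht hs)⟩

end Core
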